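/- arXiv:1901.11016 — 9 statements merged into one kernel-verified Lean document; each statement's English description precedes it below -/
import Mathlib

section
/- For every real number t ≥ 1 and all real numbers x, y, one has |x - y|^{t-2} (x - y) (x⁻ - y⁻) ≥ |x⁻ - y⁻|^t, where x⁻ = min{x, 0} denotes the negative part. -/
open Real

theorem stmt0 (t : ℝ) (ht : 1 ≤ t) (x y : ℝ) :
    |min x 0 - min y 0| ^ t ≤ |x - y| ^ (t - 2) * (x - y) * (min x 0 - min y 0) := by
  set a := min x 0 - min y 0 with ha
  have hle : |a| ≤ |x - y| := by
    have := abs_min_sub_min_le_max x 0 y 0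
    simpa using this
  have hsgn : 0 ≤ (x - y) * a := by
    rcases le_total x y with h | h
    · have h1 : x - y ≤ 0 := by linarith
      have h2 : a ≤ 0 := by
        have : min x 0 ≤ min y 0 := min_le_min h le_rfl
        linarith
      nlinarith
    · have h1 : 0 ≤ x - y := by linarith
      have h2 : 0 ≤ a := by
        have : min y 0 ≤ min x 0 := min_le_min h le_rfl
        linarith
      exact mul_nonneg h1 h2
  by_cases h0 : a = 0
  · rw [h0]
    simp [Real.zero_rpow (by linarith : t ≠ 0)]
  · have hapos : 0 < |a| := abs_pos.mpr h0
    have hxy : x ≠ y := by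
      intro h
      apply h0
      rw [ha, h]; ring
    have hxpos : 0 < |x - y| := abs_pos.mpr (sub_ne_zero.mpr hxy)
    have hprod : (x - y) * a = |x - y| * |a| := by
      rw [← abs_mul]
      exact (abs_of_nonneg hsgn).symm
    have key : |x - y| ^ (t - 2) * (x - y) * a
        = |x - y| ^ (t - 1) * |a| := by
      rw [mul_assoc, hprod, ← mul_assoc]
      congr 1
      have h2 : t - 1 = (t - 2) + 1 := by ring
      rw [h2, Real.rpow_add_one hxpos.ne']
    rw [key]
    have hla : |a| ^ t = |a| ^ (t - 1) * |a| := by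
      have h2 : t = (t - 1) + 1 := by ring
      nth_rewrite 1 [h2]
      rw [Real.rpow_add_one hapos.ne']
    rw [hla]
    apply mul_le_mul_of_nonneg_right _ (abs_nonneg a)
    exact Real.rpow_le_rpow (abs_nonneg a) hle (by linarith)
end

section
/- Let φ : ℝ → ℝ be differentiable and increasing with φ(0) = 0, let q > 1, define Λ(t) = |t|^q / q and Γ(t) = ∫₀ᵗ (φ'(τ))^{1/q} dτ. Then for all a, b ∈ ℝ: Λ'(a - b) · (φ(a) - φ(b)) ≥ |Γ(a) - Γ(b)|^q. -/
open Real intervalIntegral MeasureTheory Set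
open scoped ENNReal

lemma myderiv_nonneg {φ : ℝ → ℝ} (hφ : Differentiable ℝ φ)
    (hmono : Monotone φ) (x : ℝ) : 0 ≤ deriv φ x := by
  have h := ((hφ x).hasDerivAt.hasDerivWithinAt (s := Set.Ioi x))
  rw [hasDerivWithinAt_iff_tendsto_slope] at h
  have hs : Set.Ioi x \ {x} = Set.Ioi x := by
    simp [Set.diff_singleton_eq_self]
  rw [hs] at h
  refine ge_of_tendsto h ?_
  filter_upwards [self_mem_nhdsWithin] with y hy
  rw [slope_def_field]
  exact div_nonneg (sub_nonneg.2 (hmono (le_of_lt hy))) (sub_nonneg.2 (le_of_lt hy))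

lemma aux (φ : ℝ → ℝ) (hφ : Differentiable ℝ φ) (hmono : Monotone φ)
    (q : ℝ) (hq : 1 < q) {u v : ℝ} (huv : u ≤ v) :
    IntegrableOn (fun τ => deriv φ τ ^ (1 / q)) (Set.Ioc u v) ∧
      (∫ τ in u..v, deriv φ τ ^ (1 / q)) ^ q ≤ (v - u) ^ (q - 1) * (φ v - φ u) := by
  have hq0 : (0:ℝ) < q := zero_lt_one.trans hq
  have hqne : q ≠ 0 := ne_of_gt hq0
  have hd : ∀ x, 0 ≤ deriv φ x := myderiv_nonneg hφ hmono
  set g : ℝ → ℝ := fun τ => deriv φ τ ^ (1 / q) with hg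
  have hgnn : ∀ x, 0 ≤ g x := fun x => Real.rpow_nonneg (hd x) _
  have hgmeas : Measurable g :=
    (Real.continuous_rpow_const (by positivity)).measurable.comp (measurable_deriv φ)
  have hint : IntegrableOn (deriv φ) (Set.Ioc u v) :=
    integrableOn_deriv_of_nonneg (hφ.continuous.continuousOn)
      (fun x _ => (hφ x).hasDerivAt) (fun x _ => hd x)
  have hII : IntervalIntegrable (deriv φ) volume u v :=
    ⟨hint, by simp [Set.Ioc_eq_empty (not_lt.2 huv)]⟩
  have hFTC : (∫ τ in u..v, deriv φ τ) = φ v - φ u :=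
    integral_deriv_eq_sub (fun x _ => hφ x) hII
  set μ := volume.restrict (Set.Ioc u v) with hμ
  set f : ℝ → ℝ≥0∞ := fun x => ENNReal.ofReal (g x) with hf
  have hfx : ∀ x, f x = ENNReal.ofReal (deriv φ x) ^ (1 / q) := by
    intro x
    rw [hf, hg]
    exact (ENNReal.ofReal_rpow_of_nonneg (hd x) (by positivity : (0:ℝ) ≤ 1/q)).symm
  have hfq : ∀ x, f x ^ q = ENNReal.ofReal (deriv φ x) := by
    intro x
    rw [hfx x, ← ENNReal.rpow_mul, div_mul_cancel₀ 1 hqne, ENNReal.rpow_one]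
  have hlintF : ∫⁻ x, ENNReal.ofReal (deriv φ x) ∂μ = ENNReal.ofReal (φ v - φ u) := by
    rw [← ofReal_integral_eq_lintegral_ofReal hint
      (Filter.Eventually.of_forall fun x => hd x)]
    rw [← hFTC, intervalIntegral.integral_of_le huv]
  have hconj : q.HolderConjugate (q / (q - 1)) := Real.HolderConjugate.conjExponent hq
  have hH := ENNReal.lintegral_mul_le_Lp_mul_Lq μ hconj
    (f := f) (g := fun _ => 1) hgmeas.ennreal_ofReal.aemeasurable aemeasurable_const
  simp only [Pi.mul_apply, mul_one, ENNReal.one_rpow, lintegral_const, one_mul] at hH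
  rw [lintegral_congr hfq, hlintF] at hH
  have hμuniv : μ Set.univ = ENNReal.ofReal (v - u) := by
    rw [hμ, Measure.restrict_apply_univ, Real.volume_Ioc]
  rw [hμuniv] at hH
  -- hH : ∫⁻ x, f x ∂μ ≤ ofReal (φ v - φ u) ^ (1/q) * ofReal (v-u) ^ (1/(q/(q-1)))
  have hexp : 1 / (q / (q - 1)) = (q - 1) / q := by
    field_simp
  rw [hexp] at hH
  have hRfin : ENNReal.ofReal (φ v - φ u) ^ (1 / q) *
      ENNReal.ofReal (v - u) ^ ((q - 1) / q) ≠ ⊤ := by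
    have h1 : (0:ℝ) ≤ 1 / q := by positivity
    have h2 : (0:ℝ) ≤ (q - 1) / q := div_nonneg (by linarith) (le_of_lt hq0)
    exact ENNReal.mul_ne_top (ENNReal.rpow_ne_top_of_nonneg h1 ENNReal.ofReal_ne_top)
      (ENNReal.rpow_ne_top_of_nonneg h2 ENNReal.ofReal_ne_top)
  have hfin : ∫⁻ x, f x ∂μ < ⊤ := lt_of_le_of_lt hH (lt_top_iff_ne_top.2 hRfin)
  have hgint : IntegrableOn g (Set.Ioc u v) := by
    refine ⟨hgmeas.aestronglyMeasurable, ?_⟩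
    rw [hasFiniteIntegral_iff_ofReal (Filter.Eventually.of_forall hgnn)]
    exact hfin
  have hgII : IntervalIntegrable g volume u v :=
    ⟨hgint, by simp [Set.Ioc_eq_empty (not_lt.2 huv)]⟩
  have hIof : ENNReal.ofReal (∫ τ in u..v, g τ) = ∫⁻ x, f x ∂μ := by
    rw [intervalIntegral.integral_of_le huv,
      ofReal_integral_eq_lintegral_ofReal hgint (Filter.Eventually.of_forall hgnn)]
  -- convert to real inequality
  have hφnn : (0:ℝ) ≤ φ v - φ u := sub_nonneg.2 (hmono huv)
  have hvu : (0:ℝ) ≤ v - u := sub_nonneg.2 huv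
  have hIreal : (∫ τ in u..v, g τ) ≤ (φ v - φ u) ^ (1 / q) * (v - u) ^ ((q - 1) / q) := by
    rw [← ENNReal.ofReal_le_ofReal_iff (by positivity)]
    rw [hIof]
    refine le_trans hH (le_of_eq ?_)
    rw [ENNReal.ofReal_mul (by positivity),
      ← ENNReal.ofReal_rpow_of_nonneg hφnn (by positivity : (0:ℝ) ≤ 1/q),
      ← ENNReal.ofReal_rpow_of_nonneg hvu (div_nonneg (by linarith) (le_of_lt hq0))]
  refine ⟨hgint, ?_⟩
  have hInn : 0 ≤ ∫ τ in u..v, g τ :=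
    intervalIntegral.integral_nonneg huv (fun x _ => hgnn x)
  calc (∫ τ in u..v, g τ) ^ q
      ≤ ((φ v - φ u) ^ (1 / q) * (v - u) ^ ((q - 1) / q)) ^ q :=
        Real.rpow_le_rpow hInn hIreal (le_of_lt hq0)
    _ = (v - u) ^ (q - 1) * (φ v - φ u) := by
        rw [Real.mul_rpow (by positivity) (Real.rpow_nonneg hvu _),
          ← Real.rpow_mul hφnn, ← Real.rpow_mul hvu,
          div_mul_cancel₀ 1 hqne, div_mul_cancel₀ (q - 1) hqne,
          Real.rpow_one, mul_comm]

lemma auxII (φ : ℝ → ℝ) (hφ : Differentiable ℝ φ) (hmono : Monotone φ)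
    (q : ℝ) (hq : 1 < q) (u v : ℝ) :
    IntervalIntegrable (fun τ => deriv φ τ ^ (1 / q)) volume u v := by
  rcases le_total u v with h | h
  · exact ⟨(aux φ hφ hmono q hq h).1, by simp [Set.Ioc_eq_empty (not_lt.2 h)]⟩
  · exact IntervalIntegrable.symm
      ⟨(aux φ hφ hmono q hq h).1, by simp [Set.Ioc_eq_empty (not_lt.2 h)]⟩

lemma main_le (φ : ℝ → ℝ) (hφ : Differentiable ℝ φ) (hmono : Monotone φ)
    (q : ℝ) (hq : 1 < q) {a b : ℝ} (hba : b ≤ a) :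
    |(∫ τ in (0:ℝ)..a, (deriv φ τ) ^ (1 / q)) -
        ∫ τ in (0:ℝ)..b, (deriv φ τ) ^ (1 / q)| ^ q ≤
      |a - b| ^ (q - 2) * (a - b) * (φ a - φ b) := by
  have hq0 : (0:ℝ) < q := zero_lt_one.trans hq
  have hd : ∀ x, 0 ≤ deriv φ x := myderiv_nonneg hφ hmono
  have hsub : ((∫ τ in (0:ℝ)..a, (deriv φ τ) ^ (1 / q)) -
      ∫ τ in (0:ℝ)..b, (deriv φ τ) ^ (1 / q)) = ∫ τ in b..a, (deriv φ τ) ^ (1 / q) :=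
    integral_interval_sub_left (auxII φ hφ hmono q hq 0 a) (auxII φ hφ hmono q hq 0 b)
  rw [hsub]
  have hInn : 0 ≤ ∫ τ in b..a, (deriv φ τ) ^ (1 / q) :=
    intervalIntegral.integral_nonneg hba (fun x _ => Real.rpow_nonneg (hd x) _)
  rw [abs_of_nonneg hInn]
  rcases eq_or_lt_of_le hba with rfl | hlt
  · simp [Real.zero_rpow (ne_of_gt hq0)]
  · have hmain := (aux φ hφ hmono q hq hba).2
    refine le_trans hmain (le_of_eq ?_)
    have hab : (0:ℝ) < a - b := sub_pos.2 hlt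
    rw [abs_of_pos hab]
    rw [show (a - b) ^ (q - 2) * (a - b) = (a - b) ^ (q - 1) by
      nth_rewrite 2 [← Real.rpow_one (a - b)]
      rw [← Real.rpow_add hab]; ring_nf]

theorem stmt4 (φ : ℝ → ℝ) (hφ : Differentiable ℝ φ) (hmono : Monotone φ)
    (hφ0 : φ 0 = 0) (q : ℝ) (hq : 1 < q) (a b : ℝ) :
    |(∫ τ in (0:ℝ)..a, (deriv φ τ) ^ (1 / q)) -
        ∫ τ in (0:ℝ)..b, (deriv φ τ) ^ (1 / q)| ^ q ≤
      |a - b| ^ (q - 2) * (a - b) * (φ a - φ b) := by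
  rcases le_total b a with h | h
  · exact main_le φ hφ hmono q hq h
  · have hsymm := main_le φ hφ hmono q hq h
    rw [abs_sub_comm]
    calc |(∫ τ in (0:ℝ)..b, (deriv φ τ) ^ (1 / q)) -
          ∫ τ in (0:ℝ)..a, (deriv φ τ) ^ (1 / q)| ^ q
        ≤ |b - a| ^ (q - 2) * (b - a) * (φ b - φ a) := hsymm
      _ = |a - b| ^ (q - 2) * (a - b) * (φ a - φ b) := by
          rw [abs_sub_comm]; ring
end

section
/- Let N ≥ 1, s ∈ (0,1), p > 1 with N > sp, and let p*_s = Np/(N - sp). There exists C > 0 such that for every r > 0, every K > 4, and every u ∈ L^{p*_s}(ℝᴺ): ∫_{ℝᴺ \ B_{Kr}(0)} ∫_{{y ∈ B_{2r}(0) : |x-y| > r}} |u(x)|^p / |x-y|^{N+sp} dy dx ≤ C K^{-N} ( ∫_{ℝᴺ \ B_{Kr}(0)} |u(x)|^{p*_s} dx )^{p/p*_s}. -/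
/-! For `‖x‖ ≥ K r ≥ 4 r` and `‖y‖ < 2 r` we have `‖x - y‖ ≥ ‖x‖ / 2`, so the inner integral is at
most `2 ^ (N + s p) |B_{2r}| |u x| ^ p ‖x‖ ^ (-(N + s p))`. Hölder's inequality with the exponents
`p*_s / p` and `N / (s p)` bounds the outer integral by `‖u‖ ^ p` in `L^{p*_s}` of the exterior
domain times `(∫_{‖x‖ ≥ K r} ‖x‖ ^ (-(N + s p) N / (s p))) ^ (s p / N)`, and integration in polar
coordinates shows that this last factor is a constant times `(K r) ^ (-N)`; the factor `r ^ N`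
coming from `|B_{2r}|` cancels. -/

open Real MeasureTheory Metric Set Module

lemma indicator_compl_ball_zero_norm_rpow {E : Type*} [SeminormedAddCommGroup E] (c R : ℝ) :
    (ball (0 : E) R)ᶜ.indicator (fun x ↦ ‖x‖ ^ c) = fun x ↦ (Ici R).indicator (· ^ c) ‖x‖ := by
  ext x
  by_cases hx : R ≤ ‖x‖ <;> simp [indicator, hx]

section Tail

variable {E : Type*} [NormedAddCommGroup E] [NormedSpace ℝ E] [FiniteDimensional ℝ E]
  [MeasurableSpace E] [BorelSpace E] [Nontrivial E] (μ : Measure E) [μ.IsAddHaarMeasure]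

lemma eqOn_pow_smul_indicator_Ici_rpow {n : ℕ} (hn : 1 ≤ n) (c R : ℝ) :
    EqOn (fun y : ℝ ↦ y ^ (n - 1) • (Ici R).indicator (· ^ (-c)) y)
      ((Ici R).indicator (· ^ ((n : ℝ) - 1 - c))) (Ioi 0) := by
  intro y (hy : 0 < y)
  by_cases hyR : y ∈ Ici R
  · simp only [indicator_of_mem hyR, smul_eq_mul]
    rw [← rpow_natCast, ← rpow_add hy, Nat.cast_sub hn, Nat.cast_one, sub_eq_add_neg _ c]
  · simp [indicator_of_notMem hyR]

theorem integrableOn_compl_ball_norm_rpow_neg {c R : ℝ} (hc : finrank ℝ E < c) (hR : 0 < R) :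
    IntegrableOn (fun x : E ↦ ‖x‖ ^ (-c)) (ball 0 R)ᶜ μ := by
  rw [← integrable_indicator_iff measurableSet_ball.compl, indicator_compl_ball_zero_norm_rpow,
    integrable_fun_norm_addHaar μ,
    integrableOn_congr_fun (eqOn_pow_smul_indicator_Ici_rpow finrank_pos c R) measurableSet_Ioi]
  refine (integrable_indicator_iff measurableSet_Ici).2 ?_ |>.integrableOn
  exact (integrableOn_Ici_iff_integrableOn_Ioi).2 (integrableOn_Ioi_rpow_of_lt (by linarith) hR)

theorem integral_compl_ball_norm_rpow_neg {c R : ℝ} (hc : finrank ℝ E < c) (hR : 0 < R) :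
    ∫ x in (ball (0 : E) R)ᶜ, ‖x‖ ^ (-c) ∂μ
      = finrank ℝ E * μ.real (ball 0 1) / (c - finrank ℝ E) * R ^ (finrank ℝ E - c) := by
  rw [← integral_indicator measurableSet_ball.compl, indicator_compl_ball_zero_norm_rpow,
    integral_fun_norm_addHaar μ,
    setIntegral_congr_fun measurableSet_Ioi (eqOn_pow_smul_indicator_Ici_rpow finrank_pos c R),
    setIntegral_indicator measurableSet_Ici,
    inter_eq_right.2 (Ici_subset_Ioi.2 hR), integral_Ici_eq_integral_Ioi,
    integral_Ioi_rpow_of_lt (by linarith) hR, nsmul_eq_mul, smul_eq_mul,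
    show (finrank ℝ E : ℝ) - 1 - c + 1 = finrank ℝ E - c by ring, ← neg_sub c, div_neg]
  ring

theorem addHaar_real_ball (x : E) {r : ℝ} (hr : 0 ≤ r) :
    μ.real (ball x r) = r ^ finrank ℝ E * μ.real (ball 0 1) := by
  rw [measureReal_def, Measure.addHaar_ball μ x hr, ENNReal.toReal_mul,
    ENNReal.toReal_ofReal (by positivity), measureReal_def]

end Tail

lemma MeasureTheory.MemLp.abs_rpow {α : Type*} [MeasurableSpace α] {μ : Measure α} {u : α → ℝ}
    {p q : ℝ} (hu : MemLp u (ENNReal.ofReal q) μ) (hp : 0 < p) :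
    MemLp (fun x ↦ |u x| ^ p) (ENNReal.ofReal (q / p)) μ := by
  simpa [ENNReal.toReal_ofReal hp.le, ENNReal.ofReal_div_of_pos hp]
    using hu.norm_rpow_div (ENNReal.ofReal p)

lemma norm_rpow_neg_rpow {E : Type*} [SeminormedAddCommGroup E] (x : E) (a B : ℝ) :
    (‖x‖ ^ (-a)) ^ B = ‖x‖ ^ (-(a * B)) := by
  rw [← rpow_mul (norm_nonneg x), neg_mul]

section Holder

variable {E : Type*} [NormedAddCommGroup E] [NormedSpace ℝ E] [FiniteDimensional ℝ E]
  [MeasurableSpace E] [BorelSpace E] [Nontrivial E] (μ : Measure E) [μ.IsAddHaarMeasure]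

theorem memLp_norm_rpow_neg_compl_ball {a B R : ℝ} (hB : 0 < B) (hc : finrank ℝ E < a * B)
    (hR : 0 < R) :
    MemLp (fun x : E ↦ ‖x‖ ^ (-a)) (ENNReal.ofReal B) (μ.restrict (ball 0 R)ᶜ) := by
  refine (integrable_norm_rpow_iff (measurable_norm.pow_const _).aestronglyMeasurable
    (by simpa using hB) ENNReal.ofReal_ne_top).1 ?_
  refine (integrableOn_compl_ball_norm_rpow_neg μ hc hR).congr_fun (fun x _ ↦ ?_)
    measurableSet_ball.compl
  rw [ENNReal.toReal_ofReal hB.le, norm_of_nonneg (by positivity), norm_rpow_neg_rpow]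

theorem integrableOn_abs_rpow_mul_norm_rpow_neg {u : E → ℝ} {p q a B R : ℝ} (hp : 0 < p)
    (hqB : (q / p).HolderConjugate B) (hc : finrank ℝ E < a * B) (hR : 0 < R)
    (hu : MemLp u (ENNReal.ofReal q) (μ.restrict (ball 0 R)ᶜ)) :
    IntegrableOn (fun x ↦ |u x| ^ p * ‖x‖ ^ (-a)) (ball 0 R)ᶜ μ :=
  have := hqB.ennrealOfReal
  (hu.abs_rpow hp).integrable_mul (memLp_norm_rpow_neg_compl_ball μ hqB.symm.pos hc hR)

theorem setIntegral_abs_rpow_mul_norm_rpow_neg_le {u : E → ℝ} {p q a B R : ℝ} (hp : 0 < p)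
    (hqB : (q / p).HolderConjugate B) (hc : finrank ℝ E < a * B) (hR : 0 < R)
    (hu : MemLp u (ENNReal.ofReal q) (μ.restrict (ball 0 R)ᶜ)) :
    ∫ x in (ball 0 R)ᶜ, |u x| ^ p * ‖x‖ ^ (-a) ∂μ ≤
      (finrank ℝ E * μ.real (ball 0 1) / (a * B - finrank ℝ E)) ^ (1 / B) *
        R ^ (finrank ℝ E / B - a) * (∫ x in (ball 0 R)ᶜ, |u x| ^ q ∂μ) ^ (p / q) := by
  refine (integral_mul_le_Lp_mul_Lq_of_nonneg hqB (.of_forall fun x ↦ by positivity)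
    (.of_forall fun x ↦ by positivity) (hu.abs_rpow hp)
    (memLp_norm_rpow_neg_compl_ball μ hqB.symm.pos hc hR)).trans_eq ?_
  simp_rw [← rpow_mul (abs_nonneg _), mul_div_cancel₀ _ hp.ne', norm_rpow_neg_rpow,
    integral_compl_ball_norm_rpow_neg μ hc hR, one_div_div]
  have hT : 0 ≤ finrank ℝ E * μ.real (ball 0 1) / (a * B - finrank ℝ E) :=
    div_nonneg (by positivity) (by linarith)
  have hexp : (finrank ℝ E - a * B) * (1 / B) = finrank ℝ E / B - a := by
    field_simp [hqB.symm.ne_zero]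
  rw [mul_rpow hT (rpow_nonneg hR.le _), ← rpow_mul hR.le, hexp]
  ring

end Holder

lemma norm_div_two_le_dist {E : Type*} [SeminormedAddCommGroup E] {x y : E}
    (h : ‖y‖ ≤ ‖x‖ / 2) : ‖x‖ / 2 ≤ dist x y := by
  rw [dist_eq_norm]
  linarith [norm_sub_norm_le x y]

section Kernel

variable {E : Type*} [NormedAddCommGroup E] [ProperSpace E] [MeasurableSpace E]

theorem setIntegral_div_dist_rpow_le (ν : Measure E) [IsFiniteMeasureOnCompacts ν] {S : Set E}
    {x : E} {c a ρ : ℝ} (hS : S ⊆ ball 0 ρ) (hρ : 2 * ρ ≤ ‖x‖) (hc : 0 ≤ c) (ha : 0 ≤ a) :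
    ∫ y in S, c / dist x y ^ a ∂ν ≤ 2 ^ a * ν.real (ball 0 ρ) * (c * ‖x‖ ^ (-a)) := by
  have hbound : ∀ y ∈ S, ‖c / dist x y ^ a‖ ≤ 2 ^ a * (c * ‖x‖ ^ (-a)) := by
    intro y hy
    have hy : ‖y‖ < ρ := mem_ball_zero_iff.1 (hS hy)
    have hx : 0 < ‖x‖ / 2 := by linarith [norm_nonneg y]
    have hdist : ‖x‖ / 2 ≤ dist x y := norm_div_two_le_dist (by linarith)
    calc ‖c / dist x y ^ a‖ = c / dist x y ^ a := norm_of_nonneg (by positivity)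
      _ ≤ c / (‖x‖ / 2) ^ a := by gcongr
      _ = 2 ^ a * (c * ‖x‖ ^ (-a)) := by
        rw [div_rpow (norm_nonneg x) zero_le_two, rpow_neg (norm_nonneg x)]
        field_simp
  have hSν : ν S < ⊤ := measure_lt_top_of_subset hS measure_ball_lt_top.ne
  calc ∫ y in S, c / dist x y ^ a ∂ν ≤ ‖∫ y in S, c / dist x y ^ a ∂ν‖ := le_norm_self _
    _ ≤ 2 ^ a * (c * ‖x‖ ^ (-a)) * ν.real S := norm_setIntegral_le_of_norm_le_const hSν hbound
    _ ≤ 2 ^ a * (c * ‖x‖ ^ (-a)) * ν.real (ball 0 ρ) := by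
      gcongr
      exact measure_ball_lt_top.ne
    _ = 2 ^ a * ν.real (ball 0 ρ) * (c * ‖x‖ ^ (-a)) := by ring

theorem setIntegral_compl_ball_setIntegral_div_dist_rpow_le [OpensMeasurableSpace E]
    (μ ν : Measure E) [IsFiniteMeasureOnCompacts ν] {f : E → ℝ} (hf : 0 ≤ f) {S : E → Set E}
    {ρ R a : ℝ} (hS : ∀ x, S x ⊆ ball 0 ρ) (hρR : 2 * ρ ≤ R) (ha : 0 ≤ a)
    (hint : IntegrableOn (fun x ↦ f x * ‖x‖ ^ (-a)) (ball 0 R)ᶜ μ) :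
    ∫ x in (ball 0 R)ᶜ, ∫ y in S x, f x / dist x y ^ a ∂ν ∂μ ≤
      2 ^ a * ν.real (ball 0 ρ) * ∫ x in (ball 0 R)ᶜ, f x * ‖x‖ ^ (-a) ∂μ := by
  rw [← integral_const_mul]
  refine integral_mono_of_nonneg (.of_forall fun x ↦ integral_nonneg fun y ↦ ?_)
    (hint.const_mul _) ((ae_restrict_iff' measurableSet_ball.compl).2 (.of_forall fun x hx ↦ ?_))
  · exact div_nonneg (hf x) (by positivity)
  · refine setIntegral_div_dist_rpow_le ν (hS x) (hρR.trans ?_) (hf x) ha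
    simpa using hx

end Kernel

lemma fractionalSobolev_exponents {N s p : ℝ} (hp : 0 < p) (hsp : 0 < s * p)
    (hNsp : s * p < N) :
    (N * p / (N - s * p) / p).HolderConjugate (N / (s * p)) ∧
      N < (N + s * p) * (N / (s * p)) ∧ N / (N / (s * p)) - (N + s * p) = -N := by
  have hN0 : 0 < N := hsp.trans hNsp
  have hN : 0 < N - s * p := by linarith
  have hA : N * p / (N - s * p) / p = N / (N - s * p) := by field_simp
  refine ⟨Real.holderConjugate_iff.2 ⟨?_, ?_⟩, ?_, ?_⟩
  · rw [hA, lt_div_iff₀ hN]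
    linarith
  · rw [hA]
    field_simp
    ring
  · rw [add_mul, mul_div_cancel₀ _ hsp.ne']
    linarith [mul_pos hN0 (div_pos hN0 hsp)]
  · field_simp
    ring

theorem stmt9_general (N : ℕ) (s p : ℝ) (hs : s ∈ Set.Ioo (0:ℝ) 1)
    (hp : 1 < p) (hNsp : s * p < N) :
    ∃ C > (0 : ℝ), ∀ r > (0 : ℝ), ∀ K > (4 : ℝ),
      ∀ u : EuclideanSpace ℝ (Fin N) → ℝ,
      MemLp u (ENNReal.ofReal (N * p / (N - s * p))) volume →
      (∫ x in (ball (0 : EuclideanSpace ℝ (Fin N)) (K * r))ᶜ,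
          ∫ y in {y | y ∈ ball (0 : EuclideanSpace ℝ (Fin N)) (2 * r) ∧ r < dist x y},
            |u x| ^ p / dist x y ^ ((N : ℝ) + s * p)) ≤
        C * K ^ (-(N : ℝ)) *
          (∫ x in (ball (0 : EuclideanSpace ℝ (Fin N)) (K * r))ᶜ,
              |u x| ^ (N * p / (N - s * p))) ^ (p / (N * p / (N - s * p))) := by
  have hp0 : 0 < p := by linarith
  have hsp : 0 < s * p := mul_pos hs.1 hp0
  have hN0 : (0 : ℝ) < N := hsp.trans hNsp
  have : Nontrivial (EuclideanSpace ℝ (Fin N)) :=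
    Module.nontrivial_of_finrank_pos (R := ℝ) (by simpa using hN0)
  obtain ⟨hAB, hc, hexp⟩ := fractionalSobolev_exponents hp0 hsp hNsp
  set B := (N : ℝ) / (s * p)
  set a := (N : ℝ) + s * p
  have hv : 0 < volume.real (ball (0 : EuclideanSpace ℝ (Fin N)) 1) :=
    ENNReal.toReal_pos (measure_ball_pos volume _ one_pos).ne' measure_ball_lt_top.ne
  set T := N * volume.real (ball (0 : EuclideanSpace ℝ (Fin N)) 1) / (a * B - N)
  have hT : 0 < T := div_pos (by positivity) (by linarith)
  refine ⟨2 ^ a * 2 ^ N * volume.real (ball (0 : EuclideanSpace ℝ (Fin N)) 1) * T ^ (1 / B),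
    mul_pos (mul_pos (by positivity) hv) (rpow_pos_of_pos hT _), fun r hr K hK u hu ↦ ?_⟩
  have hKr : 0 < K * r := by positivity
  have huΩ := hu.restrict (ball 0 (K * r))ᶜ
  calc _ ≤ 2 ^ a * volume.real (ball (0 : EuclideanSpace ℝ (Fin N)) (2 * r)) *
        ∫ x in (ball 0 (K * r))ᶜ, |u x| ^ p * ‖x‖ ^ (-a) :=
      setIntegral_compl_ball_setIntegral_div_dist_rpow_le volume volume (fun x ↦ by positivity)
        (fun x y hy ↦ hy.1) (by nlinarith) (by positivity)
        (integrableOn_abs_rpow_mul_norm_rpow_neg volume hp0 hAB (by simpa) hKr huΩ)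
    _ ≤ 2 ^ a * volume.real (ball (0 : EuclideanSpace ℝ (Fin N)) (2 * r)) *
        (T ^ (1 / B) * (K * r) ^ (N / B - a) *
          (∫ x in (ball 0 (K * r))ᶜ, |u x| ^ (N * p / (N - s * p))) ^
            (p / (N * p / (N - s * p)))) := by
      gcongr
      simpa using setIntegral_abs_rpow_mul_norm_rpow_neg_le volume hp0 hAB (by simpa) hKr huΩ
    _ = _ := by
      rw [addHaar_real_ball volume 0 (by positivity), hexp, mul_rpow (by linarith) hr.le, mul_pow,
        finrank_euclideanSpace_fin, rpow_neg hr.le, rpow_natCast]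
      field_simp

theorem stmt9 (N : ℕ) (hN : 1 ≤ N) (s p : ℝ) (hs : s ∈ Set.Ioo (0:ℝ) 1)
    (hp : 1 < p) (hNsp : s * p < N) :
    ∃ C > (0 : ℝ), ∀ r > (0 : ℝ), ∀ K > (4 : ℝ),
      ∀ u : EuclideanSpace ℝ (Fin N) → ℝ,
      MemLp u (ENNReal.ofReal (N * p / (N - s * p))) volume →
      (∫ x in (ball (0 : EuclideanSpace ℝ (Fin N)) (K * r))ᶜ,
          ∫ y in {y | y ∈ ball (0 : EuclideanSpace ℝ (Fin N)) (2 * r) ∧ r < dist x y},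
            |u x| ^ p / dist x y ^ ((N : ℝ) + s * p)) ≤
        C * K ^ (-(N : ℝ)) *
          (∫ x in (ball (0 : EuclideanSpace ℝ (Fin N)) (K * r))ᶜ,
              |u x| ^ (N * p / (N - s * p))) ^ (p / (N * p / (N - s * p))) :=
  stmt9_general N s p hs hp hNsp
end

section
/- Let p > 1 and let {u_n} be a bounded sequence in L^p(ℝ^k) converging almost everywhere to u. Then u ∈ L^p(ℝ^k) and ‖u_n - u‖_p^p = ‖u_n‖_p^p - ‖u‖_p^p + o(1) as n → ∞ (Brezis–Lieb lemma). -/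
open Real MeasureTheory Filter Topology
open scoped ENNReal

/-!
Convexity of `t ↦ t ^ p` gives, for every `ε > 0`, a constant `C_ε` with
`| |a + b| ^ p - |a| ^ p - |b| ^ p | ≤ ε |a| ^ p + C_ε |b| ^ p`. Take `a = u n - u`, `b = u` and let
`D n` be the bracket. The positive part of `|D n| - ε |u n - u| ^ p` is dominated by `C_ε |u| ^ p`
and tends to `0` a.e., so its integral tends to `0` by dominated convergence, while
`ε ∫ |u n - u| ^ p` is at most `ε` times a bound uniform in `n`. Fatou's lemma puts `u` in `L^p`
and provides that uniform bound.
-/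

theorem Real.add_rpow_le_rpow_mul_add {x y l p : ℝ} (hx : 0 ≤ x) (hy : 0 ≤ y)
    (hl₀ : 0 < l) (hl₁ : l < 1) (hp : 1 ≤ p) :
    (x + y) ^ p ≤ l ^ (1 - p) * x ^ p + (1 - l) ^ (1 - p) * y ^ p := by
  have hl' : 0 < 1 - l := sub_pos.2 hl₁
  have hconv := (convexOn_rpow hp).2 (Set.mem_Ici.2 (div_nonneg hx hl₀.le))
    (Set.mem_Ici.2 (div_nonneg hy hl'.le)) hl₀.le hl'.le (add_sub_cancel l 1)
  have hxy : l • (x / l) + (1 - l) • (y / (1 - l)) = x + y := by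
    simp only [smul_eq_mul]; field_simp
  have hscale : ∀ {t z : ℝ}, 0 < t → 0 ≤ z → t • (z / t) ^ p = t ^ (1 - p) * z ^ p := by
    intro t z ht hz
    rw [smul_eq_mul, div_rpow hz ht.le, rpow_sub ht, rpow_one]; ring
  rwa [hxy, hscale hl₀ hx, hscale hl' hy] at hconv

theorem exists_norm_add_rpow_le {E : Type*} [SeminormedAddGroup E] {p ε : ℝ} (hp : 1 < p)
    (hε : 0 < ε) :
    ∃ C, 0 ≤ C ∧ ∀ a b : E, ‖a + b‖ ^ p ≤ (1 + ε) * ‖a‖ ^ p + C * ‖b‖ ^ p := by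
  set l : ℝ := (1 + ε) ^ (-(p - 1)⁻¹)
  have hp' : 0 < p - 1 := sub_pos.2 hp
  have hl₀ : 0 < l := rpow_pos_of_pos (by linarith) _
  have hl₁ : l < 1 := rpow_lt_one_of_one_lt_of_neg (by linarith) (by simpa using hp')
  have hl : l ^ (1 - p) = 1 + ε := by
    rw [← rpow_mul (by linarith), show -(p - 1)⁻¹ * (1 - p) = 1 by field_simp; ring, rpow_one]
  refine ⟨(1 - l) ^ (1 - p), rpow_nonneg (by linarith) _, fun a b => ?_⟩
  calc ‖a + b‖ ^ p ≤ (‖a‖ + ‖b‖) ^ p :=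
        rpow_le_rpow (norm_nonneg _) (norm_add_le a b) (by linarith)
    _ ≤ _ := hl ▸ Real.add_rpow_le_rpow_mul_add (norm_nonneg a) (norm_nonneg b) hl₀ hl₁ hp.le

theorem exists_abs_norm_add_rpow_sub_sub_le {E : Type*} [SeminormedAddGroup E] {p ε : ℝ}
    (hp : 1 < p) (hε : 0 < ε) :
    ∃ C, ∀ a b : E, |‖a + b‖ ^ p - ‖a‖ ^ p - ‖b‖ ^ p| ≤ ε * ‖a‖ ^ p + C * ‖b‖ ^ p := by
  obtain ⟨C₁, hC₁, h₁⟩ := exists_norm_add_rpow_le (E := E) hp one_pos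
  obtain ⟨C₂, -, h₂⟩ := exists_norm_add_rpow_le (E := E) hp (half_pos hε)
  refine ⟨ε / 2 * C₁ + C₂ + 1, fun a b => ?_⟩
  have ha : 0 ≤ ‖a‖ ^ p := rpow_nonneg (norm_nonneg _) _
  have hb : 0 ≤ ‖b‖ ^ p := rpow_nonneg (norm_nonneg _) _
  have hupper := h₂ a b
  have hlower := h₂ (a + b) (-b)
  rw [add_neg_cancel_right, norm_neg] at hlower
  have hbig := mul_le_mul_of_nonneg_left (h₁ a b) (half_pos hε).le
  rw [abs_le]
  constructor <;> linarith [mul_nonneg hε.le ha, mul_nonneg (mul_nonneg (half_pos hε).le hC₁) hb]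

namespace MeasureTheory

variable {α : Type*} [MeasurableSpace α] {μ : Measure α}

theorem abs_integral_le_integral_max_abs_sub_add {D G : α → ℝ} (hD : Integrable D μ)
    (hG : Integrable G μ) (δ : ℝ) :
    |∫ x, D x ∂μ| ≤ (∫ x, max (|D x| - δ * G x) 0 ∂μ) + δ * ∫ x, G x ∂μ := by
  have hW : Integrable (fun x => max (|D x| - δ * G x) 0) μ :=
    (hD.abs.sub (hG.const_mul δ)).pos_part
  calc |∫ x, D x ∂μ| ≤ ∫ x, |D x| ∂μ := abs_integral_le_integral_abs
    _ ≤ ∫ x, (max (|D x| - δ * G x) 0 + δ * G x) ∂μ :=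
        integral_mono hD.abs (hW.add (hG.const_mul δ)) fun x => by
          simp only; linarith [le_max_left (|D x| - δ * G x) 0]
    _ = _ := by rw [integral_add hW (hG.const_mul δ), integral_const_mul]

theorem tendsto_integral_of_abs_le_mul_add {D G : ℕ → α → ℝ} {M : ℝ}
    (hD : ∀ n, Integrable (D n) μ) (hG : ∀ n, Integrable (G n) μ) (hG₀ : ∀ n x, 0 ≤ G n x)
    (hGM : ∀ n, ∫ x, G n x ∂μ ≤ M) (hlim : ∀ᵐ x ∂μ, Tendsto (D · x) atTop (𝓝 0))
    (hdom : ∀ δ > 0, ∃ F, Integrable F μ ∧ ∀ n x, |D n x| ≤ δ * G n x + F x) :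
    Tendsto (fun n => ∫ x, D n x ∂μ) atTop (𝓝 0) := by
  have hM : 0 ≤ M := (integral_nonneg (hG₀ 0)).trans (hGM 0)
  rw [Metric.tendsto_nhds]
  intro ε hε
  set δ := ε / (2 * (M + 1))
  have hδ : 0 < δ := by positivity
  have hδM : δ * M < ε / 2 := by
    calc δ * M < δ * (M + 1) := by gcongr; linarith
      _ = ε / 2 := by simp only [δ]; field_simp
  obtain ⟨F, hF, hDF⟩ := hdom δ hδ
  set W : ℕ → α → ℝ := fun n x => max (|D n x| - δ * G n x) 0
  have hW : Tendsto (fun n => ∫ x, W n x ∂μ) atTop (𝓝 0) := by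
    have := tendsto_integral_of_dominated_convergence (F := W) (f := 0) (fun x => ‖F x‖)
      (fun n => ((hD n).abs.sub ((hG n).const_mul δ)).pos_part.aestronglyMeasurable) hF.norm
      (fun n => ae_of_all _ fun x => ?_) ?_
    · simpa using this
    · rw [Real.norm_of_nonneg (le_max_right _ _)]
      exact max_le (by linarith [hDF n x, Real.le_norm_self (F x)]) (norm_nonneg _)
    · filter_upwards [hlim] with x hx
      refine squeeze_zero (fun n => le_max_right _ _) (fun n => ?_) (by simpa using hx.abs)
      exact max_le (by linarith [mul_nonneg hδ.le (hG₀ n x)]) (abs_nonneg _)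
  filter_upwards [hW.eventually_lt_const (half_pos hε)] with n hn
  rw [Real.dist_0_eq_abs]
  calc |∫ x, D n x ∂μ| ≤ (∫ x, W n x ∂μ) + δ * ∫ x, G n x ∂μ :=
        abs_integral_le_integral_max_abs_sub_add (hD n) (hG n) δ
    _ < ε / 2 + ε / 2 := by nlinarith [hGM n]
    _ = ε := add_halves ε

variable {E : Type*} [NormedAddCommGroup E]

theorem MemLp.integrable_norm_rpow_ofReal {f : α → E} {p : ℝ} (hp : 0 < p)
    (hf : MemLp f (ENNReal.ofReal p) μ) : Integrable (fun x => ‖f x‖ ^ p) μ := by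
  simpa [ENNReal.toReal_ofReal hp.le] using
    hf.integrable_norm_rpow (by simpa using hp) ENNReal.ofReal_ne_top

theorem integral_norm_rpow_le_of_eLpNorm_le {f : α → E} {p : ℝ} (hp : 0 < p)
    (hf : MemLp f (ENNReal.ofReal p) μ) {C : ℝ≥0∞} (hC : C ≠ ⊤)
    (hfC : eLpNorm f (ENNReal.ofReal p) μ ≤ C) :
    ∫ x, ‖f x‖ ^ p ∂μ ≤ C.toReal ^ p := by
  rw [hf.eLpNorm_eq_integral_rpow_norm (by simpa using hp) ENNReal.ofReal_ne_top,
    ENNReal.ofReal_le_iff_le_toReal hC, ENNReal.toReal_ofReal hp.le] at hfC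
  have hI : 0 ≤ ∫ x, ‖f x‖ ^ p ∂μ := integral_nonneg fun x => by positivity
  calc ∫ x, ‖f x‖ ^ p ∂μ = ((∫ x, ‖f x‖ ^ p ∂μ) ^ p⁻¹) ^ p := (rpow_inv_rpow hI hp.ne').symm
    _ ≤ C.toReal ^ p := by gcongr

/-- **Brezis–Lieb lemma**, with `g n = u n - u` in the usual formulation. -/
theorem tendsto_integral_norm_add_rpow_sub_sub {p : ℝ} (hp : 1 < p) {g : ℕ → α → E} {f : α → E}
    {M : ℝ} (hg : ∀ n, MemLp (g n) (ENNReal.ofReal p) μ) (hf : MemLp f (ENNReal.ofReal p) μ)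
    (hgM : ∀ n, ∫ x, ‖g n x‖ ^ p ∂μ ≤ M) (hlim : ∀ᵐ x ∂μ, Tendsto (g · x) atTop (𝓝 0)) :
    Tendsto (fun n => (∫ x, ‖g n x + f x‖ ^ p ∂μ) - (∫ x, ‖g n x‖ ^ p ∂μ) - ∫ x, ‖f x‖ ^ p ∂μ)
      atTop (𝓝 0) := by
  have hp₀ : 0 < p := one_pos.trans hp
  have hcont : Continuous fun y : E => ‖y‖ ^ p := continuous_norm.rpow_const fun _ => .inr hp₀.le
  have hIgf : ∀ n, Integrable (fun x => ‖g n x + f x‖ ^ p) μ := fun n =>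
    ((hg n).add hf).integrable_norm_rpow_ofReal hp₀
  have hIg n := (hg n).integrable_norm_rpow_ofReal hp₀
  have hIf := hf.integrable_norm_rpow_ofReal hp₀
  have key := tendsto_integral_of_abs_le_mul_add
    (D := fun n x => ‖g n x + f x‖ ^ p - ‖g n x‖ ^ p - ‖f x‖ ^ p)
    (fun n => ((hIgf n).sub (hIg n)).sub hIf) hIg (fun n x => by positivity) hgM ?_ ?_
  · refine key.congr fun n => ?_
    rw [integral_sub ?_ hIf, integral_sub (hIgf n) (hIg n)]
    exact (hIgf n).sub (hIg n)
  · filter_upwards [hlim] with x hx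
    have h₁ := (hcont.tendsto _).comp (hx.add_const (f x))
    have h₂ := (hcont.tendsto _).comp hx
    simpa [zero_rpow hp₀.ne'] using (h₁.sub h₂).sub_const (‖f x‖ ^ p)
  · intro δ hδ
    obtain ⟨C, hC⟩ := exists_abs_norm_add_rpow_sub_sub_le (E := E) hp hδ
    exact ⟨fun x => C * ‖f x‖ ^ p, (hf.integrable_norm_rpow_ofReal hp₀).const_mul C,
      fun n x => hC (g n x) (f x)⟩

end MeasureTheory

theorem stmt11_general (k : ℕ) (p : ℝ) (hp : 1 < p)
    (u : ℕ → EuclideanSpace ℝ (Fin k) → ℝ) (v : EuclideanSpace ℝ (Fin k) → ℝ)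
    (hmeas : ∀ n, AEStronglyMeasurable (u n) volume)
    (C : ℝ≥0∞) (hC : C ≠ ⊤)
    (hbdd : ∀ n, eLpNorm (u n) (ENNReal.ofReal p) volume ≤ C)
    (hae : ∀ᵐ x ∂(volume : Measure (EuclideanSpace ℝ (Fin k))),
      Tendsto (fun n => u n x) atTop (𝓝 (v x))) :
    MemLp v (ENNReal.ofReal p) volume ∧
      Tendsto (fun n =>
          (∫ x, |u n x - v x| ^ p) - ((∫ x, |u n x| ^ p) - ∫ x, |v x| ^ p))
        atTop (𝓝 0) := by
  have hu n : MemLp (u n) (ENNReal.ofReal p) volume := ⟨hmeas n, (hbdd n).trans_lt hC.lt_top⟩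
  have hvC : eLpNorm v (ENNReal.ofReal p) volume ≤ C :=
    Lp.eLpNorm_le_of_ae_tendsto (.of_forall hbdd) hmeas hae
  have hv : MemLp v (ENNReal.ofReal p) volume :=
    ⟨aestronglyMeasurable_of_tendsto_ae atTop hmeas hae, hvC.trans_lt hC.lt_top⟩
  have hdiff n : eLpNorm (u n - v) (ENNReal.ofReal p) volume ≤ 2 * C :=
    calc _ ≤ eLpNorm (u n) (ENNReal.ofReal p) volume + eLpNorm v (ENNReal.ofReal p) volume :=
          eLpNorm_sub_le (hmeas n) hv.1 (ENNReal.one_le_ofReal.2 hp.le)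
      _ ≤ 2 * C := two_mul C ▸ add_le_add (hbdd n) hvC
  have hlim : ∀ᵐ x ∂volume, Tendsto (fun n => u n x - v x) atTop (𝓝 0) := by
    filter_upwards [hae] with x hx
    simpa using hx.sub_const (v x)
  have key := tendsto_integral_norm_add_rpow_sub_sub hp (fun n => (hu n).sub hv) hv
    (fun n => integral_norm_rpow_le_of_eLpNorm_le (by linarith) ((hu n).sub hv)
      (by finiteness) (hdiff n)) hlim
  refine ⟨hv, ?_⟩
  convert key.neg using 2 with n
  · simp only [Pi.sub_apply, sub_add_cancel, Real.norm_eq_abs]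
    ring
  · exact neg_zero.symm

theorem stmt11 (k : ℕ) (hk : 1 ≤ k) (p : ℝ) (hp : 1 < p)
    (u : ℕ → EuclideanSpace ℝ (Fin k) → ℝ) (v : EuclideanSpace ℝ (Fin k) → ℝ)
    (hmeas : ∀ n, AEStronglyMeasurable (u n) volume)
    (C : ℝ≥0∞) (hC : C ≠ ⊤)
    (hbdd : ∀ n, eLpNorm (u n) (ENNReal.ofReal p) volume ≤ C)
    (hae : ∀ᵐ x ∂(volume : Measure (EuclideanSpace ℝ (Fin k))),
      Tendsto (fun n => u n x) atTop (𝓝 (v x))) :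
    MemLp v (ENNReal.ofReal p) volume ∧
      Tendsto (fun n =>
          (∫ x, |u n x - v x| ^ p) - ((∫ x, |u n x| ^ p) - ∫ x, |v x| ^ p))
        atTop (𝓝 0) :=
  stmt11_general k p hp u v hmeas C hC hbdd hae
end

section
/- Let p ≥ 2, s ∈ (0,1), N ≥ 1, p' = p/(p-1). Define A(u)(x,y) = |u(x)-u(y)|^{p-2}(u(x)-u(y)) / |x-y|^{(N+sp)/p'}. Let w ∈ D^{s,p}(ℝᴺ) and {z_n} ⊂ D^{s,p}(ℝᴺ) with z_n → 0 a.e. in ℝᴺ and [z_n]_{s,p} ≤ C. Then ∬_{ℝ^{2N}} |A(z_n + w) - A(z_n) - A(w)|^{p'} dx dy → 0 as n → ∞. -/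
open Real MeasureTheory Filter Topology
open scoped ENNReal

/-- The operator `A(u)(x,y) = |u(x)-u(y)|^{p-2}(u(x)-u(y)) / |x-y|^{(N+sp)/p'}`. -/
noncomputable def fracA (N : ℕ) (s p p' : ℝ)
    (v : EuclideanSpace ℝ (Fin N) → ℝ) (x y : EuclideanSpace ℝ (Fin N)) : ℝ :=
  |v x - v y| ^ (p - 2) * (v x - v y) / dist x y ^ (((N : ℝ) + s * p) / p')

/-!
Write `φ(t) = |t|^{p-2} t`, so that `A(u)(x,y) = φ(u x - u y) / |x-y|^{(N+sp)/p'}`. For every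
`ε > 0` there is `K_ε` with `|φ(a+b) - φ(a) - φ(b)| ≤ ε |φ(a)| + K_ε |φ(b)|`. Hence the defect
`D_n = A(z_n + w) - A(z_n) - A(w)` satisfies `|D_n| ≤ ε |A(z_n)| + (|D_n| - ε |A(z_n)|)⁺`, where the
last term is dominated by `K_ε |A(w)| ∈ L^{p'}` and tends to `0` a.e. because `z_n → 0` a.e.
As `∫∫ |A(z_n)|^{p'} = [z_n]_{s,p}^p ≤ C`, dominated convergence gives
`limsup ∫∫ |D_n|^{p'} ≤ 2^{p'-1} ε^{p'} C` for every `ε > 0`.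
-/

noncomputable def signedRpow (r t : ℝ) : ℝ := |t| ^ r * t

section signedRpow

variable {r : ℝ}

@[simp] lemma signedRpow_zero : signedRpow r 0 = 0 := by simp [signedRpow]

@[simp] lemma signedRpow_one : signedRpow r 1 = 1 := by simp [signedRpow]

lemma signedRpow_mul (a b : ℝ) : signedRpow r (a * b) = signedRpow r a * signedRpow r b := by
  simp only [signedRpow, abs_mul, Real.mul_rpow (abs_nonneg a) (abs_nonneg b)]
  ring

lemma abs_signedRpow (hr : r + 1 ≠ 0) (t : ℝ) : |signedRpow r t| = |t| ^ (r + 1) := by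
  rw [signedRpow, abs_mul, abs_of_nonneg (by positivity), Real.rpow_add_one' (abs_nonneg t) hr]

lemma continuous_signedRpow (hr : 0 ≤ r) : Continuous (signedRpow r) :=
  (continuous_abs.rpow_const fun _ => Or.inr hr).mul continuous_id

/-- Continuity of `signedRpow r` at `0` handles small `t`; for `|t| ≥ δ` every term is
`O(|t| ^ (r + 1))`. -/
lemma exists_abs_signedRpow_one_add_sub_sub_le (hr : 0 ≤ r) {ε : ℝ} (hε : 0 < ε) :
    ∃ K, 0 ≤ K ∧ ∀ t, |signedRpow r (1 + t) - 1 - signedRpow r t| ≤ ε + K * |signedRpow r t| := by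
  have hf : Continuous fun t => signedRpow r (1 + t) - 1 - signedRpow r t := by
    have := continuous_signedRpow hr
    fun_prop
  obtain ⟨δ, hδ, hsmall⟩ := Metric.continuous_iff.1 hf 0 ε hε
  have hq : 0 ≤ r + 1 := by linarith
  refine ⟨3 * (δ⁻¹ + 1) ^ (r + 1), by positivity, fun t => ?_⟩
  have hK : 0 ≤ 3 * (δ⁻¹ + 1) ^ (r + 1) * |signedRpow r t| := by positivity
  rcases lt_or_ge |t| δ with ht | ht
  · have := hsmall t (by simpa using ht)
    simp only [add_zero, signedRpow_one, signedRpow_zero, sub_self, dist_zero_right,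
      Real.norm_eq_abs] at this
    linarith
  have h1t : 1 + |t| ≤ (δ⁻¹ + 1) * |t| := by
    have : 1 ≤ δ⁻¹ * |t| := by rw [inv_mul_eq_div, one_le_div hδ]; exact ht
    linarith
  calc |signedRpow r (1 + t) - 1 - signedRpow r t|
      ≤ |signedRpow r (1 + t)| + 1 + |signedRpow r t| := by
        have := abs_sub (signedRpow r (1 + t) - 1) (signedRpow r t)
        have := abs_sub (signedRpow r (1 + t)) 1
        simp only [abs_one] at *
        linarith
    _ ≤ 3 * (1 + |t|) ^ (r + 1) := by
        rw [abs_signedRpow (by linarith), abs_signedRpow (by linarith)]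
        have e1 : |1 + t| ^ (r + 1) ≤ (1 + |t|) ^ (r + 1) := by
          gcongr; exact (abs_add_le 1 t).trans (by simp)
        have e2 : 1 ≤ (1 + |t|) ^ (r + 1) :=
          Real.one_le_rpow (by linarith [abs_nonneg t]) hq
        have e3 : |t| ^ (r + 1) ≤ (1 + |t|) ^ (r + 1) := by gcongr; linarith
        linarith
    _ ≤ 3 * (δ⁻¹ + 1) ^ (r + 1) * |signedRpow r t| := by
        rw [abs_signedRpow (by linarith), mul_assoc, ← Real.mul_rpow (by positivity)
          (abs_nonneg t)]
        gcongr
    _ ≤ ε + 3 * (δ⁻¹ + 1) ^ (r + 1) * |signedRpow r t| := by linarith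

/-- By multiplicativity of `signedRpow r` this reduces to `a = 1`. -/
lemma exists_abs_signedRpow_add_sub_sub_le (hr : 0 ≤ r) {ε : ℝ} (hε : 0 < ε) :
    ∃ K, 0 ≤ K ∧ ∀ a b, |signedRpow r (a + b) - signedRpow r a - signedRpow r b| ≤
      ε * |signedRpow r a| + K * |signedRpow r b| := by
  obtain ⟨K, hK0, hK⟩ := exists_abs_signedRpow_one_add_sub_sub_le hr hε
  refine ⟨K, hK0, fun a b => ?_⟩
  rcases eq_or_ne a 0 with rfl | ha
  · simp only [zero_add, sub_self, signedRpow_zero, sub_zero, abs_zero]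
    positivity
  obtain ⟨t, rfl⟩ : ∃ t, b = a * t := ⟨b / a, (mul_div_cancel₀ b ha).symm⟩
  calc |signedRpow r (a + a * t) - signedRpow r a - signedRpow r (a * t)|
      = |signedRpow r a| * |signedRpow r (1 + t) - 1 - signedRpow r t| := by
        rw [← abs_mul, show a + a * t = a * (1 + t) by ring, signedRpow_mul, signedRpow_mul]
        ring_nf
    _ ≤ |signedRpow r a| * (ε + K * |signedRpow r t|) := by gcongr; exact hK t
    _ = ε * |signedRpow r a| + K * |signedRpow r (a * t)| := by
        rw [signedRpow_mul, abs_mul]; ring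

end signedRpow

section Lintegral

variable {α β : Type*} [MeasurableSpace α] [MeasurableSpace β] {μ : Measure α} {ν : Measure β}

lemma measure_eq_zero_of_ae_mem_imp_eq_top {s : Set α} {g : α → ℝ≥0∞} (hs : MeasurableSet s)
    (hg : ∫⁻ x, g x ∂μ ≠ ∞) (h : ∀ᵐ x ∂μ, x ∈ s → g x = ∞) : μ s = 0 := by
  by_contra hs0
  refine hg (eq_top_iff.2 ?_)
  calc ∞ = ∫⁻ x, s.indicator (fun _ => ∞) x ∂μ := by
        rw [lintegral_indicator_const hs, ENNReal.top_mul hs0]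
    _ ≤ ∫⁻ x, g x ∂μ := lintegral_mono_ae <| h.mono fun x hx => by
        by_cases hxs : x ∈ s <;> simp [hxs, hx]

/-- Dominated convergence without any measurability assumption: replace `f n` by a measurable
minorant with the same integral. Since `g` need not be measurable, `∫⁻ g < ∞` does not force
`g < ∞` a.e., whence the form of `hlim`. -/
lemma tendsto_lintegral_nhds_zero_of_le {f : ℕ → α → ℝ≥0∞} {g : α → ℝ≥0∞}
    (hfg : ∀ n, f n ≤ g) (hg : ∫⁻ x, g x ∂μ ≠ ∞)
    (hlim : ∀ᵐ x ∂μ, g x ≠ ∞ → Tendsto (fun n => f n x) atTop (𝓝 0)) :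
    Tendsto (fun n => ∫⁻ x, f n x ∂μ) atTop (𝓝 0) := by
  choose m hm hmf hmint using fun n => exists_measurable_le_lintegral_eq μ (f n)
  have hbad : μ {x | ¬Tendsto (fun n => m n x) atTop (𝓝 0)} = 0 := by
    refine measure_eq_zero_of_ae_mem_imp_eq_top (measurableSet_tendsto _ hm).compl hg ?_
    filter_upwards [hlim] with x hx hxbad
    by_contra hgx
    exact hxbad <| tendsto_of_tendsto_of_tendsto_of_le_of_le tendsto_const_nhds (hx hgx)
      (fun n => zero_le) fun n => hmf n x
  simp_rw [hmint]
  simpa using tendsto_lintegral_of_dominated_convergence g hm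
    (fun n => Eventually.of_forall fun x => (hmf n x).trans (hfg n x)) hg
    (measure_eq_zero_iff_ae_notMem.1 hbad |>.mono fun x hx => not_not.1 hx)

lemma tendsto_lintegral_lintegral_nhds_zero_of_le {f : ℕ → α → β → ℝ≥0∞} {g : α → β → ℝ≥0∞}
    (hfg : ∀ n x y, f n x y ≤ g x y) (hg : ∫⁻ x, ∫⁻ y, g x y ∂ν ∂μ ≠ ∞)
    (hlim : ∀ᵐ x ∂μ, ∀ᵐ y ∂ν, Tendsto (fun n => f n x y) atTop (𝓝 0)) :
    Tendsto (fun n => ∫⁻ x, ∫⁻ y, f n x y ∂ν ∂μ) atTop (𝓝 0) := by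
  refine tendsto_lintegral_nhds_zero_of_le (fun n x => lintegral_mono (hfg n x)) hg ?_
  filter_upwards [hlim] with x hx hgx
  exact tendsto_lintegral_nhds_zero_of_le (hfg · x) hgx (hx.mono fun y hy _ => hy)

lemma lintegral_lintegral_add_of_aemeasurable_left [SFinite ν] {f g : α → β → ℝ≥0∞}
    (hf : AEMeasurable (Function.uncurry f) (μ.prod ν)) :
    ∫⁻ x, ∫⁻ y, (f x y + g x y) ∂ν ∂μ =
      ∫⁻ x, ∫⁻ y, f x y ∂ν ∂μ + ∫⁻ x, ∫⁻ y, g x y ∂ν ∂μ := by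
  rw [← lintegral_add_left' hf.lintegral_prod_right]
  obtain ⟨F, hFm, hfF⟩ := hf
  refine lintegral_congr_ae ?_
  filter_upwards [Measure.ae_ae_of_ae_prod hfF] with x hx
  exact lintegral_add_left' ⟨fun y => F (x, y), hFm.comp measurable_prodMk_left, hx⟩ _

lemma tendsto_integral_integral_of_tendsto_lintegral_lintegral_enorm {E : Type*}
    [NormedAddCommGroup E] [NormedSpace ℝ E] {f : ℕ → α → β → E}
    (h : Tendsto (fun n => ∫⁻ x, ∫⁻ y, ‖f n x y‖ₑ ∂ν ∂μ) atTop (𝓝 0)) :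
    Tendsto (fun n => ∫ x, ∫ y, f n x y ∂ν ∂μ) atTop (𝓝 0) := by
  refine tendsto_zero_iff_enorm_tendsto_zero.2 <|
    tendsto_of_tendsto_of_tendsto_of_le_of_le tendsto_const_nhds h (fun n => zero_le) fun n => ?_
  exact (enorm_integral_le_lintegral_enorm _).trans
    (lintegral_mono fun x => enorm_integral_le_lintegral_enorm _)

lemma ENNReal.tendsto_nhds_zero_of_forall_le_add {ι κ : Type*} {l : Filter ι} {l' : Filter κ}
    [l'.NeBot] {L : ι → ℝ≥0∞} {a : κ → ℝ≥0∞} (ha : Tendsto a l' (𝓝 0))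
    (h : ∀ᶠ ε in l', ∃ R : ι → ℝ≥0∞, Tendsto R l (𝓝 0) ∧ ∀ i, L i ≤ a ε + R i) :
    Tendsto L l (𝓝 0) := by
  refine ENNReal.tendsto_nhds_zero.2 fun δ hδ => ?_
  obtain ⟨ε, haε, R, hR, hLR⟩ :=
    ((ha.eventually (gt_mem_nhds (ENNReal.half_pos hδ.ne'))).and h).exists
  filter_upwards [hR.eventually (gt_mem_nhds (ENNReal.half_pos hδ.ne'))] with i hi
  calc L i ≤ a ε + R i := hLR i
    _ ≤ δ / 2 + δ / 2 := add_le_add haε.le hi.le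
    _ = δ := ENNReal.add_halves δ

end Lintegral

/-- `[v]_{s,p}^p`. -/
noncomputable def gagliardoEnergy (N : ℕ) (s p : ℝ) (v : EuclideanSpace ℝ (Fin N) → ℝ) : ℝ≥0∞ :=
  ∫⁻ x, ∫⁻ y, ENNReal.ofReal (|v x - v y| ^ p / dist x y ^ ((N : ℝ) + s * p))

noncomputable def fracADefect (N : ℕ) (s p p' : ℝ) (v w : EuclideanSpace ℝ (Fin N) → ℝ)
    (x y : EuclideanSpace ℝ (Fin N)) : ℝ :=
  fracA N s p p' (fun t => v t + w t) x y - fracA N s p p' v x y - fracA N s p p' w x y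

section fracA

variable {N : ℕ} {s p p' : ℝ} {v w : EuclideanSpace ℝ (Fin N) → ℝ}
  {x y : EuclideanSpace ℝ (Fin N)}

lemma fracA_eq_signedRpow_div :
    fracA N s p p' v x y = signedRpow (p - 2) (v x - v y) / dist x y ^ (((N : ℝ) + s * p) / p') :=
  rfl

lemma fracADefect_eq : fracADefect N s p p' v w x y =
    (signedRpow (p - 2) ((v x - v y) + (w x - w y)) - signedRpow (p - 2) (v x - v y) -
      signedRpow (p - 2) (w x - w y)) / dist x y ^ (((N : ℝ) + s * p) / p') := by
  rw [fracADefect, fracA_eq_signedRpow_div, fracA_eq_signedRpow_div, fracA_eq_signedRpow_div,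
    sub_div, sub_div, add_sub_add_comm]

lemma enorm_fracA_rpow (hpq : p.HolderConjugate p') :
    ‖fracA N s p p' v x y‖ₑ ^ p' =
      ENNReal.ofReal (|v x - v y| ^ p / dist x y ^ ((N : ℝ) + s * p)) := by
  rw [Real.enorm_eq_ofReal_abs, ENNReal.ofReal_rpow_of_nonneg (abs_nonneg _) hpq.symm.nonneg,
    fracA_eq_signedRpow_div, abs_div, abs_signedRpow (by linarith [hpq.lt]),
    abs_of_nonneg (Real.rpow_nonneg dist_nonneg _),
    Real.div_rpow (by positivity) (by positivity),
    ← Real.rpow_mul (abs_nonneg _), ← Real.rpow_mul dist_nonneg,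
    div_mul_cancel₀ _ hpq.symm.ne_zero, show p - 2 + 1 = p - 1 by ring, hpq.sub_one_mul_conj]

lemma exists_enorm_fracADefect_le (hp : 2 ≤ p) {ε : ℝ} (hε : 0 < ε) :
    ∃ K : ℝ, ∀ (v w : EuclideanSpace ℝ (Fin N) → ℝ) (x y : EuclideanSpace ℝ (Fin N)),
      ‖fracADefect N s p p' v w x y‖ₑ ≤ ENNReal.ofReal ε * ‖fracA N s p p' v x y‖ₑ +
        ENNReal.ofReal K * ‖fracA N s p p' w x y‖ₑ := by
  obtain ⟨K, hK0, hK⟩ := exists_abs_signedRpow_add_sub_sub_le (r := p - 2) (by linarith) hε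
  refine ⟨K, fun v w x y => ?_⟩
  simp only [Real.enorm_eq_ofReal_abs, ← ENNReal.ofReal_mul hε.le, ← ENNReal.ofReal_mul hK0]
  rw [← ENNReal.ofReal_add (by positivity) (by positivity)]
  refine ENNReal.ofReal_le_ofReal ?_
  rw [fracADefect_eq, fracA_eq_signedRpow_div, fracA_eq_signedRpow_div, abs_div, abs_div,
    abs_div, mul_div_assoc', mul_div_assoc', ← add_div]
  exact div_le_div_of_nonneg_right (hK _ _) (abs_nonneg _)

lemma tendsto_fracADefect (hp : 2 ≤ p) {z : ℕ → EuclideanSpace ℝ (Fin N) → ℝ}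
    (hx : Tendsto (fun n => z n x) atTop (𝓝 0)) (hy : Tendsto (fun n => z n y) atTop (𝓝 0)) :
    Tendsto (fun n => fracADefect N s p p' (z n) w x y) atTop (𝓝 0) := by
  have hφ := continuous_signedRpow (r := p - 2) (by linarith)
  have hdefect : Continuous fun a => signedRpow (p - 2) (a + (w x - w y)) -
      signedRpow (p - 2) a - signedRpow (p - 2) (w x - w y) := by fun_prop
  simp_rw [fracADefect_eq]
  simpa using ((hdefect.tendsto 0).comp (by simpa using hx.sub hy)).div_const
    (dist x y ^ (((N : ℝ) + s * p) / p'))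

lemma lintegral_enorm_fracADefect_rpow_le (hpq : p.HolderConjugate p')
    (hv : AEMeasurable v) (ε : ℝ) :
    ∫⁻ x, ∫⁻ y, ‖fracADefect N s p p' v w x y‖ₑ ^ p' ≤
      2 ^ (p' - 1) * (ENNReal.ofReal ε ^ p' * gagliardoEnergy N s p v +
        ∫⁻ x, ∫⁻ y, (‖fracADefect N s p p' v w x y‖ₑ -
          ENNReal.ofReal ε * ‖fracA N s p p' v x y‖ₑ) ^ p') := by
  have hp'1 : 1 ≤ p' := hpq.symm.lt.le
  have hmeas : AEMeasurable (Function.uncurry fun x y : EuclideanSpace ℝ (Fin N) =>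
      ENNReal.ofReal ε ^ p' * ENNReal.ofReal (|v x - v y| ^ p / dist x y ^ ((N : ℝ) + s * p)))
      (volume.prod volume) := by
    have := hv.comp_fst (ν := (volume : Measure (EuclideanSpace ℝ (Fin N))))
    have := hv.comp_snd (μ := (volume : Measure (EuclideanSpace ℝ (Fin N))))
    unfold Function.uncurry
    fun_prop
  calc ∫⁻ x, ∫⁻ y, ‖fracADefect N s p p' v w x y‖ₑ ^ p'
      ≤ ∫⁻ x, ∫⁻ y, 2 ^ (p' - 1) * ((ENNReal.ofReal ε * ‖fracA N s p p' v x y‖ₑ) ^ p' +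
          (‖fracADefect N s p p' v w x y‖ₑ - ENNReal.ofReal ε * ‖fracA N s p p' v x y‖ₑ) ^ p') :=
        lintegral_mono fun x => lintegral_mono fun y =>
          (ENNReal.rpow_le_rpow le_add_tsub (by linarith)).trans
            (ENNReal.rpow_add_le_mul_rpow_add_rpow _ _ hp'1)
    _ = _ := by
        have h2 : (2 : ℝ≥0∞) ^ (p' - 1) ≠ ∞ :=
          ENNReal.rpow_ne_top_of_nonneg (by linarith) ENNReal.ofNat_ne_top
        have hε : ENNReal.ofReal ε ^ p' ≠ ∞ :=
          ENNReal.rpow_ne_top_of_nonneg (by linarith) ENNReal.ofReal_ne_top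
        simp only [ENNReal.mul_rpow_of_nonneg _ _ (zero_le_one.trans hp'1),
          enorm_fracA_rpow hpq, lintegral_const_mul' _ _ h2]
        rw [lintegral_lintegral_add_of_aemeasurable_left hmeas]
        simp only [lintegral_const_mul' _ _ hε]
        rfl

lemma tendsto_lintegral_tsub_rpow (hp : 2 ≤ p) (hpq : p.HolderConjugate p') {ε : ℝ} (hε : 0 < ε)
    (hw : gagliardoEnergy N s p w ≠ ∞) {z : ℕ → EuclideanSpace ℝ (Fin N) → ℝ}
    (hz : ∀ᵐ x, Tendsto (fun n => z n x) atTop (𝓝 0)) :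
    Tendsto (fun n => ∫⁻ x, ∫⁻ y, (‖fracADefect N s p p' (z n) w x y‖ₑ -
      ENNReal.ofReal ε * ‖fracA N s p p' (z n) x y‖ₑ) ^ p') atTop (𝓝 0) := by
  have hp'0 : 0 < p' := hpq.symm.pos
  obtain ⟨K, hK⟩ := exists_enorm_fracADefect_le (N := N) (s := s) (p' := p') hp hε
  refine tendsto_lintegral_lintegral_nhds_zero_of_le
    (g := fun x y => ENNReal.ofReal K ^ p' * ‖fracA N s p p' w x y‖ₑ ^ p') (fun n x y => ?_) ?_ ?_
  · rw [← ENNReal.mul_rpow_of_nonneg _ _ hp'0.le]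
    gcongr
    exact tsub_le_iff_left.2 (hK _ _ x y)
  · simp only [enorm_fracA_rpow hpq,
      lintegral_const_mul' _ _ (ENNReal.rpow_ne_top_of_nonneg hp'0.le ENNReal.ofReal_ne_top)]
    exact ENNReal.mul_ne_top (by simp [hp'0.le]) hw
  filter_upwards [hz] with x hx
  filter_upwards [hz] with y hy
  have hdefect : Tendsto (fun n => ‖fracADefect N s p p' (z n) w x y‖ₑ ^ p') atTop (𝓝 0) := by
    simpa [hp'0] using (tendsto_fracADefect hp hx hy).enorm.ennrpow_const p'
  exact tendsto_of_tendsto_of_tendsto_of_le_of_le tendsto_const_nhds hdefect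
    (fun n => zero_le) fun n => by gcongr; exact tsub_le_self

end fracA

theorem stmt14_general (N : ℕ) (s p p' : ℝ)
    (hp : 2 ≤ p) (hp' : p' = p / (p - 1))
    (w : EuclideanSpace ℝ (Fin N) → ℝ)
    (hw : (∫⁻ x, ∫⁻ y,
        ENNReal.ofReal (|w x - w y| ^ p / dist x y ^ ((N : ℝ) + s * p))) < ⊤)
    (z : ℕ → EuclideanSpace ℝ (Fin N) → ℝ)
    (hzmeas : ∀ n, AEStronglyMeasurable (z n) volume)
    (C : ℝ≥0∞) (hC : C ≠ ⊤)
    (hzbdd : ∀ n,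
      (∫⁻ x, ∫⁻ y,
          ENNReal.ofReal (|z n x - z n y| ^ p / dist x y ^ ((N : ℝ) + s * p))) ≤ C)
    (hae : ∀ᵐ x ∂(volume : Measure (EuclideanSpace ℝ (Fin N))),
      Tendsto (fun n => z n x) atTop (𝓝 0)) :
    Tendsto (fun n => ∫ x, ∫ y,
        |fracA N s p p' (fun t => z n t + w t) x y -
          fracA N s p p' (z n) x y - fracA N s p p' w x y| ^ p')
      atTop (𝓝 0) := by
  have hpq : p.HolderConjugate p' := (Real.holderConjugate_iff_eq_conjExponent (by linarith)).2 hp'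
  have hp'0 : 0 < p' := hpq.symm.pos
  have h2 : (2 : ℝ≥0∞) ^ (p' - 1) ≠ ∞ :=
    ENNReal.rpow_ne_top_of_nonneg (by linarith [hpq.symm.lt]) ENNReal.ofNat_ne_top
  apply tendsto_integral_integral_of_tendsto_lintegral_lintegral_enorm
  simp only [Real.enorm_eq_ofReal (Real.rpow_nonneg (abs_nonneg _) _),
    ← ENNReal.ofReal_rpow_of_nonneg (abs_nonneg _) hp'0.le, ← Real.enorm_eq_ofReal_abs]
  refine ENNReal.tendsto_nhds_zero_of_forall_le_add (l' := 𝓝[>] (0 : ℝ))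
    (a := fun ε => 2 ^ (p' - 1) * (ENNReal.ofReal ε ^ p' * C)) ?_ ?_
  · have : Tendsto (fun ε : ℝ => ENNReal.ofReal ε ^ p') (𝓝[>] 0) (𝓝 0) := by
      simpa [hp'0] using ((ENNReal.tendsto_ofReal (tendsto_id (x := 𝓝 (0 : ℝ)))).ennrpow_const
        p').mono_left nhdsWithin_le_nhds
    simpa using ENNReal.Tendsto.const_mul (ENNReal.Tendsto.mul_const this (Or.inr hC)) (Or.inr h2)
  filter_upwards [self_mem_nhdsWithin] with ε hε
  have hR := ENNReal.Tendsto.const_mul (tendsto_lintegral_tsub_rpow hp hpq hε hw.ne hae) (Or.inr h2)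
  rw [mul_zero] at hR
  refine ⟨_, hR, fun n => ?_⟩
  rw [← mul_add]
  refine (lintegral_enorm_fracADefect_rpow_le hpq (hzmeas n).aemeasurable ε).trans ?_
  gcongr
  exact hzbdd n

theorem stmt14 (N : ℕ) (hN : 1 ≤ N) (s p p' : ℝ) (hs : s ∈ Set.Ioo (0:ℝ) 1)
    (hp : 2 ≤ p) (hp' : p' = p / (p - 1))
    (w : EuclideanSpace ℝ (Fin N) → ℝ)
    (hw : (∫⁻ x, ∫⁻ y,
        ENNReal.ofReal (|w x - w y| ^ p / dist x y ^ ((N : ℝ) + s * p))) < ⊤)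
    (z : ℕ → EuclideanSpace ℝ (Fin N) → ℝ)
    (hzmeas : ∀ n, AEStronglyMeasurable (z n) volume)
    (C : ℝ≥0∞) (hC : C ≠ ⊤)
    (hzbdd : ∀ n,
      (∫⁻ x, ∫⁻ y,
          ENNReal.ofReal (|z n x - z n y| ^ p / dist x y ^ ((N : ℝ) + s * p))) ≤ C)
    (hae : ∀ᵐ x ∂(volume : Measure (EuclideanSpace ℝ (Fin N))),
      Tendsto (fun n => z n x) atTop (𝓝 0)) :
    Tendsto (fun n => ∫ x, ∫ y,
        |fracA N s p p' (fun t => z n t + w t) x y -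
          fracA N s p p' (z n) x y - fracA N s p p' w x y| ^ p')
      atTop (𝓝 0) :=
  stmt14_general N s p p' hp hp' w hw z hzmeas C hC hzbdd hae
end

section
/- Let 1 < p < r and f : ℝ → ℝ continuous with |f(t)| ≤ ξ|t|^{p-1} + C_ξ|t|^{r-1} for all t, and F(t) = ∫₀ᵗ f. Let {u_n} be bounded in L^p(ℝᴺ) ∩ L^r(ℝᴺ) with u_n → u a.e., and set v_n = u_n - u, where u ∈ L^p ∩ L^r. Then ∫_{ℝᴺ} (F(v_n) - F(u_n) + F(u)) dx → 0 as n → ∞. -/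
open Real MeasureTheory Filter Topology intervalIntegral
open scoped ENNReal

/-!
With `h n = F (u n - v) - F (u n) + F v`, the bound `|F a - F b| ≤ |a - b| · sup |f|` and a
weighted Young inequality give, for every `η > 0`, a constant `C` with
`|h n| ≤ η (|u n|^p + |u n|^r) + C (|v|^p + |v|^r)`. The excess
`max (|h n| - η (|u n|^p + |u n|^r)) 0` tends to `0` a.e. and is dominated by `C (|v|^p + |v|^r)`,
so its integral tends to `0`; what remains is at most `η` times the uniform bound on
`∫ |u n|^p + |u n|^r`.
-/

lemma mul_rpow_sub_one_self {x q : ℝ} (hx : 0 ≤ x) (hq : 1 ≤ q) :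
    x * x ^ (q - 1) = x ^ q := by
  have h := Real.rpow_add_one' hx (y := q - 1) (by linarith)
  rw [sub_add_cancel] at h
  rw [h, mul_comm]

lemma exists_mul_add_rpow_sub_one_le {q η : ℝ} (hq : 1 ≤ q) (hη : 0 < η) :
    ∃ C, 0 ≤ C ∧ ∀ s t : ℝ, 0 ≤ s → 0 ≤ t →
      s * (t + s) ^ (q - 1) ≤ η * t ^ q + C * s ^ q := by
  have h2 : (0 : ℝ) < 2 ^ (q - 1) := by positivity
  set δ := min 1 (η / 2 ^ (q - 1))
  have hδ : 0 < δ := lt_min one_pos (by positivity)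
  refine ⟨(δ⁻¹ + 1) ^ (q - 1), by positivity, fun s t hs ht => ?_⟩
  have hq1 : 0 ≤ q - 1 := by linarith
  rcases le_or_gt s (δ * t) with hst | hst
  · have hts : t + s ≤ 2 * t := by nlinarith [min_le_left 1 (η / 2 ^ (q - 1))]
    have hδη : δ * 2 ^ (q - 1) ≤ η := (le_div_iff₀ h2).mp (min_le_right _ _)
    calc s * (t + s) ^ (q - 1) ≤ (δ * t) * (2 * t) ^ (q - 1) := by gcongr
      _ = δ * 2 ^ (q - 1) * (t * t ^ (q - 1)) := by
          rw [Real.mul_rpow (by norm_num) ht]; ring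
      _ ≤ η * t ^ q := by rw [mul_rpow_sub_one_self ht hq]; gcongr
      _ ≤ η * t ^ q + (δ⁻¹ + 1) ^ (q - 1) * s ^ q := by
          have : 0 ≤ (δ⁻¹ + 1) ^ (q - 1) * s ^ q := by positivity
          linarith
  · have hts : t + s ≤ (δ⁻¹ + 1) * s := by
      have : t ≤ δ⁻¹ * s := by rw [inv_mul_eq_div, le_div_iff₀ hδ]; linarith
      linarith
    calc s * (t + s) ^ (q - 1) ≤ s * ((δ⁻¹ + 1) * s) ^ (q - 1) := by gcongr
      _ = (δ⁻¹ + 1) ^ (q - 1) * (s * s ^ (q - 1)) := by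
          rw [Real.mul_rpow (by positivity) hs]; ring
      _ ≤ η * t ^ q + (δ⁻¹ + 1) ^ (q - 1) * s ^ q := by
          rw [mul_rpow_sub_one_self hs hq]
          have : 0 ≤ η * t ^ q := by positivity
          linarith

section Primitive

variable {f F : ℝ → ℝ} {c p r : ℝ}

lemma nonneg_of_growth (hgrowth : ∀ t, |f t| ≤ c * (|t| ^ (p - 1) + |t| ^ (r - 1))) :
    0 ≤ c := by
  have h := hgrowth 1
  norm_num at h
  linarith [abs_nonneg (f 1)]

lemma abs_sub_le_of_growth (hf : Continuous f) (hF : ∀ t, F t = ∫ τ in (0 : ℝ)..t, f τ)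
    (hp : 1 ≤ p) (hr : 1 ≤ r)
    (hgrowth : ∀ t, |f t| ≤ c * (|t| ^ (p - 1) + |t| ^ (r - 1)))
    {a b M : ℝ} (ha : |a| ≤ M) (hb : |b| ≤ M) :
    |F a - F b| ≤ c * (M ^ (p - 1) + M ^ (r - 1)) * |a - b| := by
  have hc := nonneg_of_growth hgrowth
  have hsub : F a - F b = ∫ τ in b..a, f τ := by
    rw [hF, hF]
    exact integral_interval_sub_left (hf.intervalIntegrable 0 a) (hf.intervalIntegrable 0 b)
  have hbound : ∀ τ ∈ Set.uIoc b a, ‖f τ‖ ≤ c * (M ^ (p - 1) + M ^ (r - 1)) := by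
    intro τ hτ
    have hτM : |τ| ≤ M := abs_le.mpr <|
      Set.uIcc_subset_Icc (abs_le.mp hb) (abs_le.mp ha) (Set.uIoc_subset_uIcc hτ)
    have hp1 : 0 ≤ p - 1 := by linarith
    have hr1 : 0 ≤ r - 1 := by linarith
    calc ‖f τ‖ = |f τ| := rfl
      _ ≤ c * (|τ| ^ (p - 1) + |τ| ^ (r - 1)) := hgrowth τ
      _ ≤ c * (M ^ (p - 1) + M ^ (r - 1)) := by gcongr
  rw [hsub]
  exact intervalIntegral.norm_integral_le_of_norm_le_const hbound

lemma abs_le_of_growth (hf : Continuous f) (hF : ∀ t, F t = ∫ τ in (0 : ℝ)..t, f τ)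
    (hp : 1 ≤ p) (hr : 1 ≤ r)
    (hgrowth : ∀ t, |f t| ≤ c * (|t| ^ (p - 1) + |t| ^ (r - 1))) (t : ℝ) :
    |F t| ≤ c * (|t| ^ p + |t| ^ r) := by
  have h := abs_sub_le_of_growth hf hF hp hr hgrowth le_rfl (by simp : |(0 : ℝ)| ≤ |t|)
  rw [hF 0, integral_same, sub_zero, sub_zero] at h
  calc |F t| ≤ c * (|t| ^ (p - 1) + |t| ^ (r - 1)) * |t| := h
    _ = c * (|t| * |t| ^ (p - 1) + |t| * |t| ^ (r - 1)) := by ring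
    _ = c * (|t| ^ p + |t| ^ r) := by
      rw [mul_rpow_sub_one_self (abs_nonneg t) hp, mul_rpow_sub_one_self (abs_nonneg t) hr]

lemma exists_abs_sub_sub_add_le (hf : Continuous f) (hF : ∀ t, F t = ∫ τ in (0 : ℝ)..t, f τ)
    (hp : 1 ≤ p) (hr : 1 ≤ r)
    (hgrowth : ∀ t, |f t| ≤ c * (|t| ^ (p - 1) + |t| ^ (r - 1))) {η : ℝ} (hη : 0 < η) :
    ∃ C, ∀ a b : ℝ,
      |F (a - b) - F a + F b| ≤ η * (|a| ^ p + |a| ^ r) + C * (|b| ^ p + |b| ^ r) := by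
  have hc := nonneg_of_growth hgrowth
  have hη' : 0 < η / (c + 1) := by positivity
  obtain ⟨Cp, hCp, hp'⟩ := exists_mul_add_rpow_sub_one_le hp hη'
  obtain ⟨Cr, hCr, hr'⟩ := exists_mul_add_rpow_sub_one_le hr hη'
  refine ⟨c * (Cp + Cr + 1), fun a b => ?_⟩
  have hdiff := abs_sub_le_of_growth hf hF hp hr hgrowth (M := |a| + |b|)
    ((abs_sub _ _).trans le_rfl) (le_add_of_nonneg_right (abs_nonneg b))
  rw [sub_sub_cancel_left, abs_neg] at hdiff
  have hFb := abs_le_of_growth hf hF hp hr hgrowth b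
  have hYp := hp' |b| |a| (abs_nonneg b) (abs_nonneg a)
  have hYr := hr' |b| |a| (abs_nonneg b) (abs_nonneg a)
  have hcη : c * (η / (c + 1)) ≤ η := by
    rw [mul_div_assoc', div_le_iff₀ (by positivity)]; nlinarith
  have hap := Real.rpow_nonneg (abs_nonneg a) p
  have har := Real.rpow_nonneg (abs_nonneg a) r
  calc |F (a - b) - F a + F b| ≤ |F (a - b) - F a| + |F b| := abs_add_le _ _
    _ ≤ c * (|b| * (|a| + |b|) ^ (p - 1)) + c * (|b| * (|a| + |b|) ^ (r - 1))
        + c * (|b| ^ p + |b| ^ r) := by linarith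
    _ ≤ c * (η / (c + 1) * |a| ^ p + Cp * |b| ^ p)
        + c * (η / (c + 1) * |a| ^ r + Cr * |b| ^ r) + c * (|b| ^ p + |b| ^ r) := by gcongr
    _ ≤ η * (|a| ^ p + |a| ^ r) + c * (Cp + Cr + 1) * (|b| ^ p + |b| ^ r) := by
        have hbp := Real.rpow_nonneg (abs_nonneg b) p
        have hbr := Real.rpow_nonneg (abs_nonneg b) r
        nlinarith [mul_nonneg (mul_nonneg hc hCp) hbr, mul_nonneg (mul_nonneg hc hCr) hbp]

end Primitive

lemma tendsto_sub_sub_add_zero {G H : Type*} [TopologicalSpace G] [AddGroup G]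
    [IsTopologicalAddGroup G] [TopologicalSpace H] [AddGroup H] [IsTopologicalAddGroup H]
    {F : G → H} (hF : Continuous F) (hF0 : F 0 = 0) {ι : Type*} {l : Filter ι} {a : ι → G}
    {b : G} (ha : Tendsto a l (𝓝 b)) :
    Tendsto (fun n => F (a n - b) - F (a n) + F b) l (𝓝 0) := by
  have h₁ : Tendsto (fun n => F (a n - b)) l (𝓝 0) := by
    simpa [hF0, Function.comp_def] using (hF.tendsto 0).comp (by simpa using ha.sub_const b)
  simpa using (h₁.sub ((hF.tendsto b).comp ha)).add_const (F b)

section Integral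

variable {α : Type*} [MeasurableSpace α] {μ : Measure α}

lemma norm_integral_le_integral_max_sub_add {h w : α → ℝ} (hh : Integrable h μ)
    (hw : Integrable w μ) (η : ℝ) :
    ‖∫ x, h x ∂μ‖ ≤ ∫ x, max (|h x| - η * w x) 0 ∂μ + η * ∫ x, w x ∂μ := by
  have hG : Integrable (fun x => max (|h x| - η * w x) 0) μ :=
    (hh.abs.sub (hw.const_mul η)).pos_part
  calc ‖∫ x, h x ∂μ‖ ≤ ∫ x, |h x| ∂μ := norm_integral_le_integral_norm h
    _ ≤ ∫ x, (max (|h x| - η * w x) 0 + η * w x) ∂μ :=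
        integral_mono hh.abs (hG.add (hw.const_mul η)) fun x => by
          have := le_max_left (|h x| - η * w x) 0
          linarith
    _ = ∫ x, max (|h x| - η * w x) 0 ∂μ + η * ∫ x, w x ∂μ := by
        rw [integral_add hG (hw.const_mul η), MeasureTheory.integral_const_mul]

variable {h w : ℕ → α → ℝ} {g : α → ℝ}

lemma tendsto_integral_max_sub_zero (hh : ∀ n, AEStronglyMeasurable (h n) μ)
    (hw : ∀ n, AEStronglyMeasurable (w n) μ) (hw_nonneg : ∀ n x, 0 ≤ w n x) (hg : Integrable g μ)
    (hlim : ∀ᵐ x ∂μ, Tendsto (fun n => h n x) atTop (𝓝 0)) {η C : ℝ} (hη : 0 ≤ η)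
    (hbound : ∀ n x, |h n x| ≤ η * w n x + C * g x) :
    Tendsto (fun n => ∫ x, max (|h n x| - η * w n x) 0 ∂μ) atTop (𝓝 0) := by
  have hG_meas : ∀ n, AEStronglyMeasurable (fun x => max (|h n x| - η * w n x) 0) μ :=
    fun n => (((hh n).norm.sub ((hw n).const_mul η)).sup aestronglyMeasurable_const)
  have hG_le : ∀ n, ∀ᵐ x ∂μ, ‖max (|h n x| - η * w n x) 0‖ ≤ ‖C * g x‖ := fun n =>
    .of_forall fun x => by
      rw [Real.norm_of_nonneg (le_max_right _ _)]
      exact max_le (by linarith [hbound n x, Real.norm_eq_abs (C * g x), le_abs_self (C * g x)])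
        (norm_nonneg _)
  have hG_lim : ∀ᵐ x ∂μ, Tendsto (fun n => max (|h n x| - η * w n x) 0) atTop (𝓝 0) := by
    filter_upwards [hlim] with x hx
    refine tendsto_of_tendsto_of_tendsto_of_le_of_le tendsto_const_nhds
      (by simpa using hx.abs) (fun n => le_max_right _ _) fun n => ?_
    exact max_le (by linarith [mul_nonneg hη (hw_nonneg n x)]) (abs_nonneg _)
  simpa using tendsto_integral_of_dominated_convergence _ hG_meas (hg.const_mul C).norm
    hG_le hG_lim

lemma tendsto_integral_zero_of_abs_le (hh : ∀ n, AEStronglyMeasurable (h n) μ)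
    (hw : ∀ n, Integrable (w n) μ) (hw_nonneg : ∀ n x, 0 ≤ w n x) {S : ℝ}
    (hS : ∀ n, ∫ x, w n x ∂μ ≤ S) (hg : Integrable g μ)
    (hlim : ∀ᵐ x ∂μ, Tendsto (fun n => h n x) atTop (𝓝 0))
    (hbound : ∀ η > 0, ∃ C, ∀ n x, |h n x| ≤ η * w n x + C * g x) :
    Tendsto (fun n => ∫ x, h n x ∂μ) atTop (𝓝 0) := by
  rw [NormedAddGroup.tendsto_nhds_zero]
  intro ε hε
  obtain ⟨C₁, hC₁⟩ := hbound 1 one_pos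
  have hh_int : ∀ n, Integrable (h n) μ := fun n =>
    ((hw n).const_mul 1).add (hg.const_mul C₁) |>.mono' (hh n) (.of_forall (hC₁ n))
  set η := ε / (2 * (|S| + 1))
  have hη : 0 < η := by positivity
  have hηS : η * S < ε / 2 := by
    have : η * (2 * (|S| + 1)) = ε := div_mul_cancel₀ ε (by positivity)
    nlinarith [le_abs_self S]
  obtain ⟨C, hC⟩ := hbound η hη
  have hexcess := tendsto_integral_max_sub_zero hh (fun n => (hw n).1) hw_nonneg hg hlim hη.le hC
  filter_upwards [hexcess.eventually_lt_const (half_pos hε)] with n hn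
  calc ‖∫ x, h n x ∂μ‖ ≤ ∫ x, max (|h n x| - η * w n x) 0 ∂μ + η * ∫ x, w n x ∂μ :=
        norm_integral_le_integral_max_sub_add (hh_int n) (hw n) η
    _ ≤ ∫ x, max (|h n x| - η * w n x) 0 ∂μ + η * S := by gcongr; exact hS n
    _ < ε := by linarith

lemma integrable_abs_rpow_of_memLp {u : α → ℝ} {q : ℝ} (hq : 0 < q)
    (hu : MemLp u (ENNReal.ofReal q) μ) : Integrable (fun x => |u x| ^ q) μ := by
  simpa [ENNReal.toReal_ofReal hq.le] using
    hu.integrable_norm_rpow (by simpa using hq) ENNReal.ofReal_ne_top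

lemma integral_abs_rpow_le_of_eLpNorm_le {u : α → ℝ} {q : ℝ} (hq : 0 < q)
    (hu : MemLp u (ENNReal.ofReal q) μ) {B : ℝ≥0∞} (hB : B ≠ ⊤)
    (hle : eLpNorm u (ENNReal.ofReal q) μ ≤ B) :
    ∫ x, |u x| ^ q ∂μ ≤ B.toReal ^ q := by
  have hnorm :=
    lpNorm_eq_integral_norm_rpow_toReal (by simpa using hq) ENNReal.ofReal_ne_top hu.1
  rw [← toReal_eLpNorm hu.1, ENNReal.toReal_ofReal hq.le] at hnorm
  have hI : 0 ≤ ∫ x, ‖u x‖ ^ q ∂μ := integral_nonneg fun x => by positivity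
  calc ∫ x, |u x| ^ q ∂μ = ((∫ x, ‖u x‖ ^ q ∂μ) ^ q⁻¹) ^ q := by
        rw [Real.rpow_inv_rpow hI hq.ne']; rfl
    _ ≤ B.toReal ^ q := by
        rw [← hnorm]; gcongr

end Integral

theorem stmt15_general (N : ℕ) (p r ξ Cξ : ℝ) (hp : 1 < p) (hpr : p < r)
    (f : ℝ → ℝ) (hf : Continuous f)
    (hgrowth : ∀ t : ℝ, |f t| ≤ ξ * |t| ^ (p - 1) + Cξ * |t| ^ (r - 1))
    (F : ℝ → ℝ) (hF : ∀ t : ℝ, F t = ∫ τ in (0:ℝ)..t, f τ)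
    (u : ℕ → EuclideanSpace ℝ (Fin N) → ℝ) (v : EuclideanSpace ℝ (Fin N) → ℝ)
    (hup : ∀ n, MemLp (u n) (ENNReal.ofReal p) volume)
    (hur : ∀ n, MemLp (u n) (ENNReal.ofReal r) volume)
    (Cb : ℝ≥0∞) (hCb : Cb ≠ ⊤)
    (hbp : ∀ n, eLpNorm (u n) (ENNReal.ofReal p) volume ≤ Cb)
    (hbr : ∀ n, eLpNorm (u n) (ENNReal.ofReal r) volume ≤ Cb)
    (hvp : MemLp v (ENNReal.ofReal p) volume)
    (hvr : MemLp v (ENNReal.ofReal r) volume)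
    (hae : ∀ᵐ x ∂(volume : Measure (EuclideanSpace ℝ (Fin N))),
      Tendsto (fun n => u n x) atTop (𝓝 (v x))) :
    Tendsto (fun n => ∫ x, (F (u n x - v x) - F (u n x) + F (v x)))
      atTop (𝓝 0) := by
  have hp0 : 0 < p := by linarith
  have hr0 : 0 < r := by linarith
  have hgrowth' : ∀ t, |f t| ≤ max ξ Cξ * (|t| ^ (p - 1) + |t| ^ (r - 1)) := fun t => by
    nlinarith [hgrowth t, le_max_left ξ Cξ, le_max_right ξ Cξ,
      Real.rpow_nonneg (abs_nonneg t) (p - 1), Real.rpow_nonneg (abs_nonneg t) (r - 1)]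
  have hFcont : Continuous F := by
    rw [funext hF]; exact continuous_primitive hf.intervalIntegrable 0
  have hF0 : F 0 = 0 := by rw [hF, integral_same]
  have hw : ∀ n, Integrable (fun x => |u n x| ^ p + |u n x| ^ r) volume := fun n =>
    (integrable_abs_rpow_of_memLp hp0 (hup n)).add (integrable_abs_rpow_of_memLp hr0 (hur n))
  have hS : ∀ n, ∫ x, (|u n x| ^ p + |u n x| ^ r) ≤ Cb.toReal ^ p + Cb.toReal ^ r := fun n => by
    rw [integral_add (integrable_abs_rpow_of_memLp hp0 (hup n))
      (integrable_abs_rpow_of_memLp hr0 (hur n))]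
    exact add_le_add (integral_abs_rpow_le_of_eLpNorm_le hp0 (hup n) hCb (hbp n))
      (integral_abs_rpow_le_of_eLpNorm_le hr0 (hur n) hCb (hbr n))
  have hg := (integrable_abs_rpow_of_memLp hp0 hvp).add (integrable_abs_rpow_of_memLp hr0 hvr)
  refine tendsto_integral_zero_of_abs_le (fun n => by have := (hup n).1; have := hvp.1; fun_prop)
    hw (fun n x => by positivity) hS hg
    (hae.mono fun x hx => tendsto_sub_sub_add_zero hFcont hF0 hx)
    fun η hη => ?_
  obtain ⟨C, hC⟩ := exists_abs_sub_sub_add_le hf hF hp.le (by linarith) hgrowth' hη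
  exact ⟨C, fun n x => hC (u n x) (v x)⟩

theorem stmt15 (N : ℕ) (hN : 1 ≤ N) (p r ξ Cξ : ℝ) (hp : 1 < p) (hpr : p < r)
    (hξ : 0 < ξ) (hCξ : 0 < Cξ)
    (f : ℝ → ℝ) (hf : Continuous f)
    (hgrowth : ∀ t : ℝ, |f t| ≤ ξ * |t| ^ (p - 1) + Cξ * |t| ^ (r - 1))
    (F : ℝ → ℝ) (hF : ∀ t : ℝ, F t = ∫ τ in (0:ℝ)..t, f τ)
    (u : ℕ → EuclideanSpace ℝ (Fin N) → ℝ) (v : EuclideanSpace ℝ (Fin N) → ℝ)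
    (hup : ∀ n, MemLp (u n) (ENNReal.ofReal p) volume)
    (hur : ∀ n, MemLp (u n) (ENNReal.ofReal r) volume)
    (Cb : ℝ≥0∞) (hCb : Cb ≠ ⊤)
    (hbp : ∀ n, eLpNorm (u n) (ENNReal.ofReal p) volume ≤ Cb)
    (hbr : ∀ n, eLpNorm (u n) (ENNReal.ofReal r) volume ≤ Cb)
    (hvp : MemLp v (ENNReal.ofReal p) volume)
    (hvr : MemLp v (ENNReal.ofReal r) volume)
    (hae : ∀ᵐ x ∂(volume : Measure (EuclideanSpace ℝ (Fin N))),
      Tendsto (fun n => u n x) atTop (𝓝 (v x))) :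
    Tendsto (fun n => ∫ x, (F (u n x - v x) - F (u n x) + F (v x)))
      atTop (𝓝 0) :=
  stmt15_general N p r ξ Cξ hp hpr f hf hgrowth F hF u v hup hur Cb hCb hbp hbr hvp hvr hae
end

section
/- Let q > 1 and let F : ℝ → ℝ be differentiable with F(0) = 0 and F' = f satisfying: f(t)/t^{q-1} is increasing on (0,∞). Then for every t > 0, the quantity (1/q) f(t) t - F(t) ≥ 0, and moreover t ↦ (1/q) f(t) t - F(t) is nondecreasing on (0, ∞). -/
/-!
Write `f t = g t * t ^ (q - 1)` with `g` monotone. For `0 ≤ a ≤ b` the function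
`t ↦ F t - g b * t ^ q / q` has derivative `(g t - g b) * t ^ (q - 1) ≤ 0` on `(a, b)`, so
`F b - F a ≤ g b * (b ^ q - a ^ q) / q`. With `a = 0` this is `F b ≤ f b * b / q`; for `a > 0`,
combining it with `g a * a ^ q ≤ g b * a ^ q` gives the monotonicity.
-/

open Real Set

lemma div_rpow_sub_one_mul_rpow (x : ℝ) {t : ℝ} (ht : 0 < t) (q : ℝ) :
    x / t ^ (q - 1) * t ^ q = x * t := by
  rw [rpow_sub_one ht.ne']
  field_simp [(rpow_pos_of_pos ht q).ne']

lemma sub_le_mul_rpow_sub_of_le_mul_rpow {q a b c : ℝ} {F f : ℝ → ℝ} (hq : 0 < q)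
    (ha : 0 ≤ a) (hab : a ≤ b) (hFc : ContinuousOn F (Icc a b))
    (hF : ∀ t ∈ Ioo a b, HasDerivAt F (f t) t) (hle : ∀ t ∈ Ioo a b, f t ≤ c * t ^ (q - 1)) :
    F b - F a ≤ c * (b ^ q - a ^ q) / q := by
  have hanti : AntitoneOn (fun t => F t - c * t ^ q / q) (Icc a b) := by
    refine antitoneOn_of_hasDerivWithinAt_nonpos (convex_Icc a b)
      (f' := fun t => f t - c * t ^ (q - 1)) ?_ ?_ ?_
    · exact hFc.sub
        (((continuousOn_id.rpow_const fun _ _ => Or.inr hq.le).const_smul c).div_const q)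
    · rw [interior_Icc]
      intro t ht
      have hpow :=
        ((hasDerivAt_rpow_const (p := q) (Or.inl (ha.trans_lt ht.1).ne')).const_mul c).div_const q
      rw [show c * (q * t ^ (q - 1)) = c * t ^ (q - 1) * q by ring, mul_div_cancel_right₀ _ hq.ne']
        at hpow
      exact ((hF t ht).sub hpow).hasDerivWithinAt
    · rw [interior_Icc]
      exact fun t ht => sub_nonpos.2 (hle t ht)
  have := hanti (left_mem_Icc.2 hab) (right_mem_Icc.2 hab) hab
  simp only at this
  linarith [show c * (b ^ q - a ^ q) / q = c * b ^ q / q - c * a ^ q / q by ring]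

lemma sub_le_of_monotoneOn_div_rpow {q a b : ℝ} {F f : ℝ → ℝ} (hq : 0 < q)
    (hF : ∀ t, HasDerivAt F (f t) t) (hmono : MonotoneOn (fun t => f t / t ^ (q - 1)) (Ioi 0))
    (ha : 0 ≤ a) (hab : a ≤ b) :
    F b - F a ≤ f b / b ^ (q - 1) * (b ^ q - a ^ q) / q := by
  refine sub_le_mul_rpow_sub_of_le_mul_rpow hq ha hab
    (fun t _ => (hF t).continuousAt.continuousWithinAt) (fun t _ => hF t) fun t ht => ?_
  have ht0 : 0 < t := ha.trans_lt ht.1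
  calc f t = f t / t ^ (q - 1) * t ^ (q - 1) := by
        field_simp [(rpow_pos_of_pos ht0 (q - 1)).ne']
    _ ≤ f b / b ^ (q - 1) * t ^ (q - 1) :=
        mul_le_mul_of_nonneg_right (hmono ht0 (ht0.trans ht.2) ht.2.le)
          (rpow_pos_of_pos ht0 _).le

theorem stmt16 (q : ℝ) (hq : 1 < q) (F f : ℝ → ℝ)
    (hF : ∀ t : ℝ, HasDerivAt F (f t) t) (hF0 : F 0 = 0)
    (hmono : MonotoneOn (fun t => f t / t ^ (q - 1)) (Set.Ioi 0)) :
    (∀ t > (0 : ℝ), 0 ≤ (1 / q) * f t * t - F t) ∧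
      MonotoneOn (fun t => (1 / q) * f t * t - F t) (Set.Ioi 0) := by
  have hq0 : 0 < q := one_pos.trans hq
  constructor
  · intro t ht
    have key := sub_le_of_monotoneOn_div_rpow hq0 hF hmono le_rfl ht.le
    rw [hF0, zero_rpow hq0.ne', sub_zero, sub_zero, div_rpow_sub_one_mul_rpow _ ht] at key
    linarith [show f t * t / q = 1 / q * f t * t by ring]
  · intro a (ha : 0 < a) b (hb : 0 < b) hab
    have key := sub_le_of_monotoneOn_div_rpow hq0 hF hmono ha.le hab
    set g := f b / b ^ (q - 1)
    have hga : f a * a ≤ g * a ^ q := by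
      rw [← div_rpow_sub_one_mul_rpow (f a) ha q]
      exact mul_le_mul_of_nonneg_right (hmono ha hb hab) (rpow_pos_of_pos ha q).le
    have hgb : g * b ^ q = f b * b := div_rpow_sub_one_mul_rpow (f b) hb q
    have hdiff : g * (b ^ q - a ^ q) / q ≤ (f b * b - f a * a) / q :=
      div_le_div_of_nonneg_right (by rw [mul_sub, hgb]; linarith) hq0.le
    simp only
    linarith [show (f b * b - f a * a) / q = 1 / q * f b * b - 1 / q * f a * a by ring]
end

section
/- Let 1 < p < q and f : ℝ → ℝ continuous with f(t) = 0 for t ≤ 0, lim_{t→0⁺} f(t)/t^{p-1} = 0, and f(t)/t^{q-1} increasing on (0,∞). Let A, B > 0 and u ≥ 0 measurable with u ≢ 0 and with ∫ f(t u) u dx finite for all t > 0. Then the equation t^{p-1} A + t^{q-1} B = ∫_{ℝᴺ} f(t u) u dx has at most one solution t > 0. -/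
/-! Dividing the equation by `t ^ (q - 1)` turns its left side into `t ^ (p - q) * A + B`, strictly
decreasing in `t` since `p < q`, and its right side into `∫ f (t u) / (t u) ^ (q - 1) * u ^ q`,
nondecreasing in `t` by the monotonicity of `f t / t ^ (q - 1)`. Such functions agree at most once. -/

open Real MeasureTheory Filter Topology

theorem eq_of_strictAntiOn_of_monotoneOn {α β : Type*} [LinearOrder α] [Preorder β]
    {g h : α → β} {s : Set α} (hg : StrictAntiOn g s) (hh : MonotoneOn h s)
    {a b : α} (ha : a ∈ s) (hb : b ∈ s) (hga : g a = h a) (hgb : g b = h b) : a = b := by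
  by_contra hab
  rcases lt_or_gt_of_ne hab with hlt | hlt
  · exact (hg ha hb hlt).not_ge (hga.trans_le ((hh ha hb hlt.le).trans_eq hgb.symm))
  · exact (hg hb ha hlt).not_ge (hgb.trans_le ((hh hb ha hlt.le).trans_eq hga.symm))

theorem rpow_mul_add_rpow_mul_div_rpow {t : ℝ} (ht : 0 < t) (p q A B : ℝ) :
    (t ^ (p - 1) * A + t ^ (q - 1) * B) / t ^ (q - 1) = t ^ (p - q) * A + B := by
  have htq : t ^ (q - 1) ≠ 0 := (rpow_pos_of_pos ht _).ne'
  rw [add_div, mul_div_right_comm, ← rpow_sub ht, mul_div_cancel_left₀ _ htq]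
  ring_nf

theorem strictAntiOn_rpow_mul_add {p q A : ℝ} (hpq : p < q) (hA : 0 < A) (B : ℝ) :
    StrictAntiOn (fun t : ℝ => t ^ (p - q) * A + B) (Set.Ioi 0) := fun _ ha _ _ hab => by
  simpa using mul_lt_mul_of_pos_right (rpow_lt_rpow_of_neg ha hab (sub_neg.2 hpq)) hA

theorem mul_div_rpow_eq_div_mul_rpow_mul (f : ℝ → ℝ) {q t c : ℝ} (ht : 0 < t) (hc : 0 < c) :
    f (t * c) * c / t ^ (q - 1) = f (t * c) / (t * c) ^ (q - 1) * c ^ q := by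
  have htq : t ^ (q - 1) ≠ 0 := (rpow_pos_of_pos ht _).ne'
  rw [mul_rpow ht.le hc.le, rpow_sub_one hc.ne' q]
  field_simp

theorem monotoneOn_mul_div_rpow {f : ℝ → ℝ} {q : ℝ}
    (hmono : MonotoneOn (fun t => f t / t ^ (q - 1)) (Set.Ioi 0)) {c : ℝ} (hc : 0 ≤ c) :
    MonotoneOn (fun t => f (t * c) * c / t ^ (q - 1)) (Set.Ioi 0) := by
  rcases hc.eq_or_lt with rfl | hc
  · simp [monotoneOn_const]
  intro s hs t ht hst
  simp only [mul_div_rpow_eq_div_mul_rpow_mul f hs hc, mul_div_rpow_eq_div_mul_rpow_mul f ht hc]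
  exact mul_le_mul_of_nonneg_right
    (hmono (mul_pos hs hc) (mul_pos ht hc) (mul_le_mul_of_nonneg_right hst hc.le))
    (rpow_nonneg hc.le _)

theorem monotoneOn_integral_mul_div_rpow {α : Type*} [MeasurableSpace α] {μ : Measure α}
    {f : ℝ → ℝ} {q : ℝ} (hmono : MonotoneOn (fun t => f t / t ^ (q - 1)) (Set.Ioi 0))
    {u : α → ℝ} (hpos : ∀ x, 0 ≤ u x)
    (hint : ∀ t > (0 : ℝ), Integrable (fun x => f (t * u x) * u x) μ) :
    MonotoneOn (fun t => (∫ x, f (t * u x) * u x ∂μ) / t ^ (q - 1)) (Set.Ioi 0) := by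
  intro s hs t ht hst
  simp only [← integral_div]
  exact integral_mono ((hint s hs).div_const _) ((hint t ht).div_const _)
    fun x => monotoneOn_mul_div_rpow hmono (hpos x) hs ht hst

theorem stmt17_general (N : ℕ) (p q : ℝ) (hpq : p < q) (f : ℝ → ℝ)
    (hmono : MonotoneOn (fun t => f t / t ^ (q - 1)) (Set.Ioi 0))
    (A B : ℝ) (hA : 0 < A) (u : EuclideanSpace ℝ (Fin N) → ℝ) (hpos : ∀ x, 0 ≤ u x)
    (hint : ∀ t > (0 : ℝ), Integrable (fun x => f (t * u x) * u x)) :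
    ∀ t₁ t₂ : ℝ, 0 < t₁ → 0 < t₂ →
      t₁ ^ (p - 1) * A + t₁ ^ (q - 1) * B = (∫ x, f (t₁ * u x) * u x) →
      t₂ ^ (p - 1) * A + t₂ ^ (q - 1) * B = (∫ x, f (t₂ * u x) * u x) →
      t₁ = t₂ := by
  intro t₁ t₂ ht₁ ht₂ h₁ h₂
  have divided : ∀ t, 0 < t → t ^ (p - 1) * A + t ^ (q - 1) * B = (∫ x, f (t * u x) * u x) →
      t ^ (p - q) * A + B = (∫ x, f (t * u x) * u x) / t ^ (q - 1) := fun t ht h => by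
    rw [← h, rpow_mul_add_rpow_mul_div_rpow ht]
  exact eq_of_strictAntiOn_of_monotoneOn (strictAntiOn_rpow_mul_add hpq hA B)
    (monotoneOn_integral_mul_div_rpow hmono hpos hint) ht₁ ht₂
    (divided t₁ ht₁ h₁) (divided t₂ ht₂ h₂)

theorem stmt17 (N : ℕ) (hN : 1 ≤ N) (p q : ℝ) (hp : 1 < p) (hpq : p < q)
    (f : ℝ → ℝ) (hf : Continuous f) (hf0 : ∀ t ≤ (0 : ℝ), f t = 0)
    (hlim0 : Tendsto (fun t => f t / t ^ (p - 1)) (𝓝[>] (0 : ℝ)) (𝓝 0))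
    (hmono : MonotoneOn (fun t => f t / t ^ (q - 1)) (Set.Ioi 0))
    (A B : ℝ) (hA : 0 < A) (hB : 0 < B)
    (u : EuclideanSpace ℝ (Fin N) → ℝ) (hmeas : Measurable u)
    (hpos : ∀ x, 0 ≤ u x) (hne : ¬ u =ᵐ[volume] 0)
    (hint : ∀ t > (0 : ℝ), Integrable (fun x => f (t * u x) * u x)) :
    ∀ t₁ t₂ : ℝ, 0 < t₁ → 0 < t₂ →
      t₁ ^ (p - 1) * A + t₁ ^ (q - 1) * B = (∫ x, f (t₁ * u x) * u x) →
      t₂ ^ (p - 1) * A + t₂ ^ (q - 1) * B = (∫ x, f (t₂ * u x) * u x) →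
      t₁ = t₂ :=
  stmt17_general N p q hpq f hmono A B hA u hpos hint
end

section
/- Let s ∈ (0,1), 1 < p with N > sp and p*_s = Np/(N - sp). Suppose ε > 0 and V : ℝᴺ → ℝ is continuous with inf V = V₀ > 0 and V(x) → ∞ as |x| → ∞. Then the space Y = {u ∈ W^{s,p}(ℝᴺ) : ∫ V(εx) |u|^p dx < ∞}, equipped with norm ‖u‖^p = [u]_{s,p}^p + ∫ V(εx)|u|^p dx, embeds compactly into L^p(ℝᴺ). -/
/-!
Replace each `u n` by its averages over finitely many cubes of side `δ` covering the ball of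
radius `R`, and by `0` outside them. On one such cube `Q`, Jensen's inequality gives
`∫_Q |u - ⨍_Q u|^p ≤ |Q|⁻¹ ∫_Q ∫_Q |u x - u y|^p ≤ (δ √N)^(N + s p) δ^(-N) [u]^p`,
which is `O(δ^(s p))` uniformly in `n`; outside the ball, `∫ |u|^p ≤ C / inf_{|x| ≥ R} V(ε x)`
is small by coercivity. So the sequence lies within any `θ > 0` of a bounded subset of a
finite-dimensional subspace of `Lᵖ`; it is totally bounded, and completeness of `Lᵖ` yields a
convergent subsequence.
-/

open Real MeasureTheory Metric Filter Topology
open scoped ENNReal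

section Averages

variable {α E : Type*} [MeasurableSpace α] [NormedAddCommGroup E] [NormedSpace ℝ E]
  {μ : Measure α}

theorem average_const_sub [CompleteSpace E] [IsFiniteMeasure μ] [NeZero μ] {f : α → E}
    (hf : Integrable f μ) (c : E) : ⨍ x, c - f x ∂μ = c - ⨍ x, f x ∂μ := by
  rw [average_eq, integral_sub (integrable_const c) hf, smul_sub, ← average_eq, ← average_eq,
    average_const]

theorem enorm_average_rpow_le_laverage [IsFiniteMeasure μ] [NeZero μ] {p : ℝ} (hp : 1 ≤ p)
    {f : α → E} (hf : AEStronglyMeasurable f μ) :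
    ‖⨍ x, f x ∂μ‖ₑ ^ p ≤ ⨍⁻ x, ‖f x‖ₑ ^ p ∂μ := by
  -- `ν` is a probability measure, so its `L¹` norm is dominated by its `Lᵖ` norm.
  set ν := (μ Set.univ)⁻¹ • μ
  have hp₀ : 0 < p := zero_lt_one.trans_le hp
  have hL1 : ‖⨍ x, f x ∂μ‖ₑ ≤ eLpNorm f (ENNReal.ofReal p) ν := calc
    ‖⨍ x, f x ∂μ‖ₑ ≤ ∫⁻ x, ‖f x‖ₑ ∂ν := enorm_integral_le_lintegral_enorm f
    _ = eLpNorm f 1 ν := eLpNorm_one_eq_lintegral_enorm.symm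
    _ ≤ eLpNorm f (ENNReal.ofReal p) ν :=
      eLpNorm_le_eLpNorm_of_exponent_le (ENNReal.one_le_ofReal.2 hp) (hf.smul_measure _)
  calc ‖⨍ x, f x ∂μ‖ₑ ^ p ≤ eLpNorm f (ENNReal.ofReal p) ν ^ p :=
        ENNReal.rpow_le_rpow hL1 hp₀.le
    _ = ⨍⁻ x, ‖f x‖ₑ ^ p ∂μ := by
      rw [eLpNorm_eq_lintegral_rpow_enorm_toReal (by simpa using hp₀) ENNReal.ofReal_ne_top,
        ENNReal.toReal_ofReal hp₀.le, ← ENNReal.rpow_mul, one_div_mul_cancel hp₀.ne',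
        ENNReal.rpow_one, laverage_eq']

end Averages

theorem ENNReal.ofReal_abs_rpow {p : ℝ} (hp : 0 ≤ p) (x : ℝ) :
    ENNReal.ofReal (|x| ^ p) = ‖x‖ₑ ^ p := by
  rw [Real.enorm_eq_ofReal_abs, ENNReal.ofReal_rpow_of_nonneg (abs_nonneg x) hp]

theorem enorm_sub_rpow_le_of_dist_le {α : Type*} [MetricSpace α] {D e p : ℝ} (he : 0 ≤ e)
    (hp : 0 < p) {g : α → ℝ} {x y : α} (hxy : dist x y ≤ D) :
    ‖g x - g y‖ₑ ^ p ≤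
      ENNReal.ofReal (D ^ e) * ENNReal.ofReal (|g x - g y| ^ p / dist x y ^ e) := by
  rcases eq_or_ne x y with rfl | hne
  · simp [ENNReal.zero_rpow_of_pos hp]
  have hd : 0 < dist x y ^ e := Real.rpow_pos_of_pos (dist_pos.2 hne) e
  rw [← ENNReal.ofReal_abs_rpow hp.le,
    ← ENNReal.ofReal_mul (Real.rpow_nonneg (dist_nonneg.trans hxy) e)]
  refine ENNReal.ofReal_le_ofReal ?_
  rw [mul_div_assoc', le_div_iff₀ hd, mul_comm]
  exact mul_le_mul_of_nonneg_right (Real.rpow_le_rpow dist_nonneg hxy he) (by positivity)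

theorem setLIntegral_enorm_sub_setAverage_rpow_le {α : Type*} [MetricSpace α] [MeasurableSpace α]
    {μ : Measure α} {Q : Set α} (hQ : MeasurableSet Q) (hμQ₀ : μ Q ≠ 0) (hμQ : μ Q ≠ ∞)
    {D e p : ℝ} (he : 0 ≤ e) (hp : 1 ≤ p) (hdiam : ∀ x ∈ Q, ∀ y ∈ Q, dist x y ≤ D)
    {g : α → ℝ} (hg : IntegrableOn g Q μ) :
    ∫⁻ x in Q, ‖g x - ⨍ y in Q, g y ∂μ‖ₑ ^ p ∂μ ≤
      ENNReal.ofReal (D ^ e) / μ Q *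
        ∫⁻ x in Q, ∫⁻ y, ENNReal.ofReal (|g x - g y| ^ p / dist x y ^ e) ∂μ ∂μ := by
  have : IsFiniteMeasure (μ.restrict Q) := isFiniteMeasure_restrict.2 hμQ
  have : NeZero (μ.restrict Q) := ⟨by simpa [Measure.restrict_eq_zero] using hμQ₀⟩
  set G : α → ℝ≥0∞ := fun x => ∫⁻ y, ENNReal.ofReal (|g x - g y| ^ p / dist x y ^ e) ∂μ
  have hpoint : ∀ x ∈ Q,
      ‖g x - ⨍ y in Q, g y ∂μ‖ₑ ^ p ≤ ENNReal.ofReal (D ^ e) / μ Q * G x := by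
    intro x hx
    calc ‖g x - ⨍ y in Q, g y ∂μ‖ₑ ^ p = ‖⨍ y in Q, (g x - g y) ∂μ‖ₑ ^ p := by
          rw [average_const_sub hg]
      _ ≤ ⨍⁻ y in Q, ‖g x - g y‖ₑ ^ p ∂μ :=
          enorm_average_rpow_le_laverage hp (aestronglyMeasurable_const.sub hg.1)
      _ ≤ (∫⁻ y in Q, ENNReal.ofReal (D ^ e) *
            ENNReal.ofReal (|g x - g y| ^ p / dist x y ^ e) ∂μ) / μ Q := by
          rw [setLAverage_eq]
          gcongr 1
          exact setLIntegral_mono' hQ fun y hy =>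
            enorm_sub_rpow_le_of_dist_le he (zero_lt_one.trans_le hp) (hdiam x hx y hy)
      _ ≤ ENNReal.ofReal (D ^ e) / μ Q * G x := by
          rw [lintegral_const_mul' _ _ ENNReal.ofReal_ne_top, ENNReal.mul_div_right_comm]
          gcongr
          exact setLIntegral_le_lintegral _ _
  calc ∫⁻ x in Q, ‖g x - ⨍ y in Q, g y ∂μ‖ₑ ^ p ∂μ
      ≤ ∫⁻ x in Q, ENNReal.ofReal (D ^ e) / μ Q * G x ∂μ := setLIntegral_mono' hQ hpoint
    _ = _ := lintegral_const_mul' _ _ (ENNReal.div_lt_top ENNReal.ofReal_ne_top hμQ₀).ne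

theorem ofReal_mul_setLIntegral_le_lintegral {α : Type*} [MeasurableSpace α] {μ : Measure α}
    {A : Set α} (hA : MeasurableSet A) {w : α → ℝ} {M : ℝ} (hM : ∀ x ∈ A, M ≤ w x)
    (f : α → ℝ≥0∞) :
    ENNReal.ofReal M * ∫⁻ x in A, f x ∂μ ≤ ∫⁻ x, ENNReal.ofReal (w x) * f x ∂μ := calc
  ENNReal.ofReal M * ∫⁻ x in A, f x ∂μ = ∫⁻ x in A, ENNReal.ofReal M * f x ∂μ :=
      (lintegral_const_mul' _ _ ENNReal.ofReal_ne_top).symm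
  _ ≤ ∫⁻ x in A, ENNReal.ofReal (w x) * f x ∂μ :=
      setLIntegral_mono' hA fun x hx => by gcongr; exact hM x hx
  _ ≤ ∫⁻ x, ENNReal.ofReal (w x) * f x ∂μ := setLIntegral_le_lintegral _ _

theorem totallyBounded_of_forall_exists_dist_lt {X : Type*} [PseudoMetricSpace X] {s : Set X}
    (h : ∀ θ > 0, ∃ t : Set X, TotallyBounded t ∧ ∀ x ∈ s, ∃ y ∈ t, dist x y < θ) :
    TotallyBounded s := by
  refine Metric.totallyBounded_iff.2 fun η hη => ?_
  obtain ⟨t, ht, hst⟩ := h (η / 2) (half_pos hη)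
  obtain ⟨c, hc, htc⟩ := Metric.totallyBounded_iff.1 ht (η / 2) (half_pos hη)
  refine ⟨c, hc, fun x hx => ?_⟩
  obtain ⟨y, hy, hxy⟩ := hst x hx
  obtain ⟨z, hz, hyz⟩ := Set.mem_iUnion₂.1 (htc hy)
  refine Set.mem_iUnion₂.2 ⟨z, hz, ?_⟩
  have := dist_triangle x y z
  rw [mem_ball] at hyz ⊢
  linarith

theorem totallyBounded_of_forall_exists_finiteDimensional {E : Type*} [NormedAddCommGroup E]
    [NormedSpace ℝ E] {s : Set E} (hs : Bornology.IsBounded s)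
    (h : ∀ θ > 0, ∃ W : Submodule ℝ E, FiniteDimensional ℝ W ∧ ∀ x ∈ s, ∃ w ∈ W, dist x w < θ) :
    TotallyBounded s := by
  obtain ⟨B, hB⟩ := hs.subset_closedBall 0
  refine totallyBounded_of_forall_exists_dist_lt fun θ hθ => ?_
  obtain ⟨W, hW, hsW⟩ := h θ hθ
  refine ⟨(↑) '' closedBall (0 : W) (B + θ),
    ((isCompact_closedBall _ _).image continuous_subtype_val).totallyBounded, fun x hx => ?_⟩
  obtain ⟨w, hw, hxw⟩ := hsW x hx
  refine ⟨w, ⟨⟨w, hw⟩, ?_, rfl⟩, hxw⟩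
  have := mem_closedBall_zero_iff.1 (hB hx)
  rw [mem_closedBall_zero_iff, Submodule.coe_norm]
  linarith [norm_le_norm_add_norm_sub' w x, dist_eq_norm x w, norm_sub_rev x w]

theorem TotallyBounded.exists_subseq_tendsto {X : Type*} [PseudoMetricSpace X] [CompleteSpace X]
    {x : ℕ → X} (hx : TotallyBounded (Set.range x)) :
    ∃ y, ∃ φ : ℕ → ℕ, StrictMono φ ∧ Tendsto (x ∘ φ) atTop (𝓝 y) := by
  obtain ⟨y, -, φ, hφ, hy⟩ := (hx.closure.isCompact_of_isClosed isClosed_closure).tendsto_subseq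
    fun n => subset_closure (Set.mem_range_self n)
  exact ⟨y, φ, hφ, hy⟩

theorem MeasureTheory.Lp.coeFn_finset_sum {α E ι : Type*} [MeasurableSpace α] {μ : Measure α}
    [NormedAddCommGroup E] {q : ℝ≥0∞} (s : Finset ι) (f : ι → Lp E q μ) :
    ⇑(∑ i ∈ s, f i) =ᵐ[μ] ∑ i ∈ s, ⇑(f i) := by
  classical
  induction s using Finset.induction_on with
  | empty => simpa using Lp.coeFn_zero E q μ
  | insert a s ha ih =>
    rw [Finset.sum_insert ha, Finset.sum_insert ha]
    filter_upwards [Lp.coeFn_add (f a) (∑ i ∈ s, f i), ih] with x hadd hsum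
    rw [hadd, Pi.add_apply, Pi.add_apply, hsum]

theorem MeasureTheory.MemLp.edist_toLp_rpow {α E : Type*} [MeasurableSpace α] {μ : Measure α}
    [NormedAddCommGroup E] {p : ℝ} (hp : 0 < p) {f : α → E} (hf : MemLp f (ENNReal.ofReal p) μ)
    (w : Lp E (ENNReal.ofReal p) μ) :
    edist (hf.toLp f) w ^ p = ∫⁻ x, ‖f x - w x‖ₑ ^ p ∂μ := by
  rw [Lp.edist_def, eLpNorm_congr_ae (hf.coeFn_toLp.sub (ae_eq_refl _)),
    eLpNorm_eq_lintegral_rpow_enorm_toReal (by simpa using hp) ENNReal.ofReal_ne_top,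
    ENNReal.toReal_ofReal hp.le, ← ENNReal.rpow_mul, one_div_mul_cancel hp.ne', ENNReal.rpow_one]
  rfl

theorem MeasureTheory.MemLp.integral_abs_sub_rpow {α : Type*} [MeasurableSpace α] {μ : Measure α}
    {p : ℝ} (hp : 0 < p) {f : α → ℝ} (hf : MemLp f (ENNReal.ofReal p) μ)
    (w : Lp ℝ (ENNReal.ofReal p) μ) :
    ∫ x, |f x - w x| ^ p ∂μ = dist (hf.toLp f) w ^ p := by
  rw [Lp.dist_edist, ENNReal.toReal_rpow, hf.edist_toLp_rpow hp,
    integral_eq_lintegral_of_nonneg_ae (.of_forall fun x => by positivity)]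
  · simp_rw [ENNReal.ofReal_abs_rpow hp.le]
  · exact ((hf.1.sub (Lp.aestronglyMeasurable w)).norm.aemeasurable.pow_const
      p).aestronglyMeasurable

section Cubes

variable {N : ℕ}

noncomputable def cubeIndex (δ : ℝ) (x : EuclideanSpace ℝ (Fin N)) : Fin N → ℤ :=
  fun i => ⌊x i / δ⌋

def cube (δ : ℝ) (z : Fin N → ℤ) : Set (EuclideanSpace ℝ (Fin N)) := cubeIndex δ ⁻¹' {z}

theorem mem_cube_cubeIndex (δ : ℝ) (x : EuclideanSpace ℝ (Fin N)) : x ∈ cube δ (cubeIndex δ x) :=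
  rfl

theorem pairwise_disjoint_cube (δ : ℝ) :
    Pairwise (Function.onFun Disjoint (cube δ : (Fin N → ℤ) → Set (EuclideanSpace ℝ (Fin N)))) :=
  fun _ _ hzw => Disjoint.preimage _ (Set.disjoint_singleton.2 hzw)

theorem measurableSet_cube (δ : ℝ) (z : Fin N → ℤ) : MeasurableSet (cube δ z) :=
  measurable_pi_iff.2 (fun i => Int.measurable_floor.comp
    ((EuclideanSpace.proj (𝕜 := ℝ) i).continuous.measurable.div_const δ))
    (MeasurableSet.singleton z)

theorem mem_cube_iff {δ : ℝ} (hδ : 0 < δ) {z : Fin N → ℤ} {x : EuclideanSpace ℝ (Fin N)} :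
    x ∈ cube δ z ↔ ∀ i, x i ∈ Set.Ico (z i * δ) ((z i + 1) * δ) := by
  simp only [cube, cubeIndex, Set.mem_preimage, Set.mem_singleton_iff, funext_iff,
    Int.floor_eq_iff, le_div_iff₀ hδ, div_lt_iff₀ hδ, Set.mem_Ico]

theorem volume_cube {δ : ℝ} (hδ : 0 < δ) (z : Fin N → ℤ) :
    volume (cube δ z) = ENNReal.ofReal δ ^ N := by
  have : cube δ z = WithLp.ofLp ⁻¹' Set.univ.pi fun i => Set.Ico (z i * δ) ((z i + 1) * δ) := by
    ext x; simp [mem_cube_iff hδ]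
  rw [this, (PiLp.volume_preserving_ofLp (Fin N)).measure_preimage
    (MeasurableSet.univ_pi fun _ => measurableSet_Ico).nullMeasurableSet, volume_pi_pi]
  simp [add_mul]

theorem dist_le_of_mem_cube {δ : ℝ} (hδ : 0 < δ) {z : Fin N → ℤ} {x y : EuclideanSpace ℝ (Fin N)}
    (hx : x ∈ cube δ z) (hy : y ∈ cube δ z) : dist x y ≤ δ * √N := by
  rw [mem_cube_iff hδ] at hx hy
  have hcoord : ∀ i, dist (x i) (y i) ^ 2 ≤ δ ^ 2 := fun i => by
    have h : |x i - y i| ≤ δ :=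
      abs_le.2 ⟨by linarith [(hx i).1, (hy i).2], by linarith [(hx i).2, (hy i).1]⟩
    rw [Real.dist_eq]
    exact pow_le_pow_left₀ (abs_nonneg _) h 2
  calc dist x y = √(∑ i, dist (x i) (y i) ^ 2) := EuclideanSpace.dist_eq x y
    _ ≤ √(∑ _i : Fin N, δ ^ 2) := Real.sqrt_le_sqrt (Finset.sum_le_sum fun i _ => hcoord i)
    _ = δ * √N := by
      rw [Finset.sum_const, Finset.card_univ, Fintype.card_fin, nsmul_eq_mul, Real.sqrt_mul',
        Real.sqrt_sq hδ.le, mul_comm]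
      positivity

theorem cubeIndex_mem_Icc_of_norm_lt {δ : ℝ} (hδ : 0 < δ) {m : ℕ} {x : EuclideanSpace ℝ (Fin N)}
    (hx : ‖x‖ < δ * m) : cubeIndex δ x ∈ Finset.Icc (-(m : Fin N → ℤ)) m := by
  have hcoord : ∀ i, |x i| < δ * m := fun i => (PiLp.norm_apply_le x i).trans_lt hx
  simp only [Finset.mem_Icc, Pi.le_def, cubeIndex, Pi.neg_apply, Pi.natCast_apply]
  refine ⟨fun i => ?_, fun i => ?_⟩
  · rw [Int.le_floor, le_div_iff₀ hδ]
    push_cast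
    linarith [neg_abs_le (x i), hcoord i]
  · rw [Int.floor_le_iff, div_lt_iff₀ hδ]
    push_cast
    linarith [le_abs_self (x i), hcoord i]

end Cubes

section CubeApprox

variable {N : ℕ} {δ : ℝ} {S : Finset (Fin N → ℤ)}

noncomputable def cubeApprox (δ : ℝ) (S : Finset (Fin N → ℤ)) (g : EuclideanSpace ℝ (Fin N) → ℝ)
    (x : EuclideanSpace ℝ (Fin N)) : ℝ :=
  ∑ z ∈ S, (cube δ z).indicator (fun _ => ⨍ y in cube δ z, g y) x

theorem cubeApprox_of_mem {g : EuclideanSpace ℝ (Fin N) → ℝ} {z : Fin N → ℤ} (hz : z ∈ S)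
    {x : EuclideanSpace ℝ (Fin N)} (hx : x ∈ cube δ z) :
    cubeApprox δ S g x = ⨍ y in cube δ z, g y := by
  rw [cubeApprox, Finset.sum_eq_single_of_mem z hz fun w _ hwz =>
    Set.indicator_of_notMem (fun hxw => hwz (hxw.symm.trans hx)) _]
  exact Set.indicator_of_mem hx _

theorem cubeApprox_of_cubeIndex_notMem {g : EuclideanSpace ℝ (Fin N) → ℝ}
    {x : EuclideanSpace ℝ (Fin N)} (hx : cubeIndex δ x ∉ S) : cubeApprox δ S g x = 0 :=
  Finset.sum_eq_zero fun z hz => Set.indicator_of_notMem (s := cube δ z) (a := x)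
    (fun hxz : cubeIndex δ x = z => hx (hxz ▸ hz)) _

theorem lintegral_enorm_sub_cubeApprox_rpow_le (hδ : 0 < δ) {e p : ℝ} (he : 0 ≤ e) (hp : 1 ≤ p)
    {g : EuclideanSpace ℝ (Fin N) → ℝ} (hg : MemLp g (ENNReal.ofReal p) volume) :
    ∫⁻ x, ‖g x - cubeApprox δ S g x‖ₑ ^ p ≤
      ENNReal.ofReal ((δ * √N) ^ e / δ ^ N) *
          (∫⁻ x, ∫⁻ y, ENNReal.ofReal (|g x - g y| ^ p / dist x y ^ e)) +
        ∫⁻ x in (⋃ z ∈ S, cube δ z)ᶜ, ‖g x‖ₑ ^ p := by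
  set A := ⋃ z ∈ S, cube δ z
  set G := fun x => ∫⁻ y, ENNReal.ofReal (|g x - g y| ^ p / dist x y ^ e)
  have hA : MeasurableSet A := S.measurableSet_biUnion fun z _ => measurableSet_cube δ z
  have hcube : ∀ z ∈ S, ∫⁻ x in cube δ z, ‖g x - cubeApprox δ S g x‖ₑ ^ p ≤
      ENNReal.ofReal ((δ * √N) ^ e / δ ^ N) * ∫⁻ x in cube δ z, G x := by
    intro z hz
    have : IsFiniteMeasure (volume.restrict (cube δ z)) :=
      isFiniteMeasure_restrict.2 (by simp [volume_cube hδ])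
    rw [setLIntegral_congr_fun (measurableSet_cube δ z) fun x hx => by
        rw [cubeApprox_of_mem hz hx],
      ENNReal.ofReal_div_of_pos (by positivity), ENNReal.ofReal_pow hδ.le, ← volume_cube hδ z]
    exact setLIntegral_enorm_sub_setAverage_rpow_le (measurableSet_cube δ z)
      (by simp [volume_cube hδ, hδ]) (by simp [volume_cube hδ]) he hp
      (fun x hx y hy => dist_le_of_mem_cube hδ hx hy)
      ((hg.restrict _).integrable (ENNReal.one_le_ofReal.2 hp))
  have houtside : ∫⁻ x in Aᶜ, ‖g x - cubeApprox δ S g x‖ₑ ^ p = ∫⁻ x in Aᶜ, ‖g x‖ₑ ^ p :=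
    setLIntegral_congr_fun hA.compl fun x hx => by
      rw [cubeApprox_of_cubeIndex_notMem fun hS =>
        hx (Set.mem_biUnion hS (mem_cube_cubeIndex δ x)), sub_zero]
  have hdisj := (pairwise_disjoint_cube (N := N) δ).set_pairwise (S : Set (Fin N → ℤ))
  have hinside : ∫⁻ x in A, ‖g x - cubeApprox δ S g x‖ₑ ^ p ≤
      ENNReal.ofReal ((δ * √N) ^ e / δ ^ N) * ∫⁻ x, G x := calc
    _ = ∑ z ∈ S, ∫⁻ x in cube δ z, ‖g x - cubeApprox δ S g x‖ₑ ^ p :=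
        lintegral_biUnion_finset hdisj (fun z _ => measurableSet_cube δ z) _
    _ ≤ ∑ z ∈ S, ENNReal.ofReal ((δ * √N) ^ e / δ ^ N) * ∫⁻ x in cube δ z, G x :=
        Finset.sum_le_sum hcube
    _ = ENNReal.ofReal ((δ * √N) ^ e / δ ^ N) * ∫⁻ x in A, G x := by
        rw [← Finset.mul_sum, lintegral_biUnion_finset hdisj (fun z _ => measurableSet_cube δ z)]
    _ ≤ ENNReal.ofReal ((δ * √N) ^ e / δ ^ N) * ∫⁻ x, G x := by
        gcongr
        exact Measure.restrict_le_self
  calc ∫⁻ x, ‖g x - cubeApprox δ S g x‖ₑ ^ p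
      = (∫⁻ x in A, ‖g x - cubeApprox δ S g x‖ₑ ^ p) +
          ∫⁻ x in Aᶜ, ‖g x - cubeApprox δ S g x‖ₑ ^ p := (lintegral_add_compl _ hA).symm
    _ ≤ _ := add_le_add hinside houtside.le

end CubeApprox

section CubeApproxLp

variable {N : ℕ} {δ : ℝ} (p : ℝ) (hδ : 0 < δ)

noncomputable def cubeIndicatorLp (z : Fin N → ℤ) :
    Lp ℝ (ENNReal.ofReal p) (volume : Measure (EuclideanSpace ℝ (Fin N))) :=
  indicatorConstLp _ (measurableSet_cube δ z) (by simp [volume_cube hδ]) 1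

noncomputable def cubeApproxLp (S : Finset (Fin N → ℤ)) (g : EuclideanSpace ℝ (Fin N) → ℝ) :
    Lp ℝ (ENNReal.ofReal p) (volume : Measure (EuclideanSpace ℝ (Fin N))) :=
  ∑ z ∈ S, (⨍ y in cube δ z, g y) • cubeIndicatorLp p hδ z

variable {p hδ}

theorem cubeApproxLp_mem_span (S : Finset (Fin N → ℤ)) (g : EuclideanSpace ℝ (Fin N) → ℝ) :
    cubeApproxLp p hδ S g ∈ Submodule.span ℝ (cubeIndicatorLp p hδ '' S) :=
  Submodule.sum_mem _ fun z hz => Submodule.smul_mem _ _ (Submodule.subset_span ⟨z, hz, rfl⟩)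

theorem coeFn_cubeApproxLp (S : Finset (Fin N → ℤ)) (g : EuclideanSpace ℝ (Fin N) → ℝ) :
    ⇑(cubeApproxLp p hδ S g) =ᵐ[volume] cubeApprox δ S g := by
  have hterm : ∀ z ∈ S, ⇑((⨍ y in cube δ z, g y) • cubeIndicatorLp p hδ z) =ᵐ[volume]
      (cube δ z).indicator fun _ => ⨍ y in cube δ z, g y := fun z _ => by
    classical
    filter_upwards [Lp.coeFn_smul (⨍ y in cube δ z, g y) (cubeIndicatorLp p hδ z),
      (indicatorConstLp_coeFn : ⇑(cubeIndicatorLp p hδ z) =ᵐ[volume] _)] with x hsmul hind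
    rw [hsmul, Pi.smul_apply, cubeIndicatorLp, hind, smul_eq_mul, Set.indicator_apply,
      Set.indicator_apply]
    split_ifs <;> simp
  filter_upwards [Lp.coeFn_finset_sum S fun z => (⨍ y in cube δ z, g y) • cubeIndicatorLp p hδ z,
    (eventually_all_finset S).2 hterm] with x hsum hterm
  rw [cubeApproxLp, hsum, Finset.sum_apply, cubeApprox]
  exact Finset.sum_congr rfl hterm

end CubeApproxLp

theorem tendsto_mul_rpow_div_pow_nhdsGT_zero {c e : ℝ} (hc : 0 ≤ c) {N : ℕ} (he : N < e) :
    Tendsto (fun δ : ℝ => (δ * c) ^ e / δ ^ N) (𝓝[>] 0) (𝓝 0) := by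
  have hlim : Tendsto (fun δ : ℝ => δ ^ (e - N) * c ^ e) (𝓝[>] 0) (𝓝 0) := by
    simpa [Real.zero_rpow (sub_pos.2 he).ne'] using
      ((Real.continuousAt_rpow_const 0 (e - N) (Or.inr (sub_pos.2 he).le)).tendsto.mono_left
        nhdsWithin_le_nhds).mul_const (c ^ e)
  refine hlim.congr' (eventually_nhdsWithin_of_forall fun δ (hδ : 0 < δ) => ?_)
  dsimp only
  rw [Real.mul_rpow hδ.le hc, Real.rpow_sub hδ, Real.rpow_natCast, mul_div_right_comm]

theorem exists_cubeApprox_lintegral_lt {N : ℕ} {e p : ℝ} {ι : Type*} (he : N < e) (hp : 1 ≤ p)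
    {u : ι → EuclideanSpace ℝ (Fin N) → ℝ} (hu : ∀ i, MemLp (u i) (ENNReal.ofReal p) volume)
    {C : ℝ≥0∞} (hC : C ≠ ∞)
    (hgag : ∀ i, ∫⁻ x, ∫⁻ y, ENNReal.ofReal (|u i x - u i y| ^ p / dist x y ^ e) ≤ C)
    (htail : ∀ η ≠ 0, ∃ R, ∀ i, ∫⁻ x in {x | R ≤ ‖x‖}, ‖u i x‖ₑ ^ p ≤ η)
    {η : ℝ} (hη : 0 < η) :
    ∃ δ > 0, ∃ S, ∀ i, ∫⁻ x, ‖u i x - cubeApprox δ S (u i) x‖ₑ ^ p < ENNReal.ofReal η := by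
  have hη2 : 0 < ENNReal.ofReal (η / 2) := by simpa using hη
  obtain ⟨R, hR⟩ := htail _ hη2.ne'
  have hcoef : Tendsto (fun δ : ℝ => ENNReal.ofReal ((δ * √N) ^ e / δ ^ N) * C) (𝓝[>] 0)
      (𝓝 0) := by
    simpa using ENNReal.Tendsto.mul_const
      (ENNReal.tendsto_ofReal (tendsto_mul_rpow_div_pow_nhdsGT_zero (Real.sqrt_nonneg N) he))
      (Or.inr hC)
  obtain ⟨δ, hδsmall, hδ⟩ :=
    ((hcoef.eventually (gt_mem_nhds hη2)).and self_mem_nhdsWithin).exists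
  set m := ⌈R / δ⌉₊
  have hRδ : R ≤ δ * m := by
    rw [← div_le_iff₀' (show (0 : ℝ) < δ from hδ)]
    exact Nat.le_ceil _
  refine ⟨δ, hδ, Finset.Icc (-(m : Fin N → ℤ)) m, fun i => ?_⟩
  have houtside : (⋃ z ∈ Finset.Icc (-(m : Fin N → ℤ)) m, cube δ z)ᶜ ⊆ {x | R ≤ ‖x‖} :=
    fun x hx => by
    by_contra hxR
    exact hx (Set.mem_biUnion (cubeIndex_mem_Icc_of_norm_lt hδ ((not_le.1 hxR).trans_le hRδ))
      (mem_cube_cubeIndex δ x))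
  calc ∫⁻ x, ‖u i x - cubeApprox δ _ (u i) x‖ₑ ^ p
      ≤ ENNReal.ofReal ((δ * √N) ^ e / δ ^ N) * C + ENNReal.ofReal (η / 2) := by
        refine (lintegral_enorm_sub_cubeApprox_rpow_le hδ ((Nat.cast_nonneg N).trans he.le) hp
          (hu i)).trans ?_
        gcongr
        · exact hgag i
        · exact (lintegral_mono_set houtside).trans (hR i)
    _ < ENNReal.ofReal (η / 2) + ENNReal.ofReal (η / 2) :=
        ENNReal.add_lt_add_right ENNReal.ofReal_ne_top hδsmall
    _ = ENNReal.ofReal η := by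
        rw [← ENNReal.ofReal_add (by positivity) (by positivity), add_halves]

theorem exists_forall_setLIntegral_le_of_tendsto_cocompact {E ι : Type*} [NormedAddCommGroup E]
    [ProperSpace E] [MeasurableSpace E] [OpensMeasurableSpace E] {μ : Measure E} {w : E → ℝ}
    (hw : Tendsto w (cocompact E) atTop) {f : ι → E → ℝ≥0∞} {C : ℝ≥0∞} (hC : C ≠ ∞)
    (hf : ∀ i, ∫⁻ x, ENNReal.ofReal (w x) * f i x ∂μ ≤ C) {η : ℝ≥0∞} (hη : η ≠ 0) :
    ∃ R, ∀ i, ∫⁻ x in {x | R ≤ ‖x‖}, f i x ∂μ ≤ η := by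
  obtain ⟨k, hk⟩ := ENNReal.exists_nat_mul_gt hη hC
  have hwk := hw.eventually_ge_atTop (k : ℝ)
  rw [← cobounded_eq_cocompact, ← comap_norm_atTop, eventually_comap, eventually_atTop] at hwk
  obtain ⟨R, hR⟩ := hwk
  refine ⟨R, fun i => le_of_lt (lt_of_mul_lt_mul_left' (a := (k : ℝ≥0∞)) (lt_of_le_of_lt ?_ hk))⟩
  simpa using (ofReal_mul_setLIntegral_le_lintegral (measurableSet_le measurable_const
    measurable_norm) (fun x hx => hR _ hx x rfl) (f i)).trans (hf i)

theorem exists_subseq_tendsto_of_gagliardo_le {N : ℕ} {e p : ℝ} (he : N < e) (hp : 1 ≤ p)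
    {u : ℕ → EuclideanSpace ℝ (Fin N) → ℝ} (hu : ∀ n, MemLp (u n) (ENNReal.ofReal p) volume)
    {B C : ℝ≥0∞} (hB : B ≠ ∞) (hC : C ≠ ∞) (hnorm : ∀ n, ∫⁻ x, ‖u n x‖ₑ ^ p ≤ B)
    (hgag : ∀ n, ∫⁻ x, ∫⁻ y, ENNReal.ofReal (|u n x - u n y| ^ p / dist x y ^ e) ≤ C)
    (htail : ∀ η ≠ 0, ∃ R, ∀ n, ∫⁻ x in {x | R ≤ ‖x‖}, ‖u n x‖ₑ ^ p ≤ η) :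
    ∃ φ : ℕ → ℕ, StrictMono φ ∧ ∃ v : EuclideanSpace ℝ (Fin N) → ℝ,
      MemLp v (ENNReal.ofReal p) volume ∧
        Tendsto (fun n => ∫ x, |u (φ n) x - v x| ^ p) atTop (𝓝 0) := by
  have hp₀ : 0 < p := zero_lt_one.trans_le hp
  have : Fact (1 ≤ ENNReal.ofReal p) := ⟨ENNReal.one_le_ofReal.2 hp⟩
  set F := fun n => (hu n).toLp (u n)
  have hbdd : Bornology.IsBounded (Set.range F) := by
    refine isBounded_iff_forall_norm_le.2 ⟨(B ^ p⁻¹).toReal, ?_⟩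
    rintro _ ⟨n, rfl⟩
    rw [Lp.norm_toLp, eLpNorm_eq_lintegral_rpow_enorm_toReal (by simpa using hp₀)
      ENNReal.ofReal_ne_top, ENNReal.toReal_ofReal hp₀.le, one_div]
    exact ENNReal.toReal_mono (ENNReal.rpow_ne_top_of_nonneg (by positivity) hB)
      (ENNReal.rpow_le_rpow (hnorm n) (by positivity))
  have hTB : TotallyBounded (Set.range F) := by
    refine totallyBounded_of_forall_exists_finiteDimensional hbdd fun θ hθ => ?_
    obtain ⟨δ, hδ, S, happrox⟩ := exists_cubeApprox_lintegral_lt he hp hu hC hgag htail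
      (Real.rpow_pos_of_pos hθ p)
    refine ⟨_, FiniteDimensional.span_of_finite ℝ (S.finite_toSet.image (cubeIndicatorLp p hδ)),
      ?_⟩
    rintro _ ⟨n, rfl⟩
    refine ⟨_, cubeApproxLp_mem_span S (u n), ?_⟩
    have hedist : edist (F n) (cubeApproxLp p hδ S (u n)) ^ p < ENNReal.ofReal θ ^ p := by
      rw [(hu n).edist_toLp_rpow hp₀, ENNReal.ofReal_rpow_of_nonneg hθ.le hp₀.le]
      refine lt_of_eq_of_lt (lintegral_congr_ae ?_) (happrox n)
      filter_upwards [coeFn_cubeApproxLp (p := p) (hδ := hδ) S (u n)] with x hx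
      rw [hx]
    exact edist_lt_ofReal.1 ((ENNReal.rpow_lt_rpow_iff hp₀).1 hedist)
  obtain ⟨v, φ, hφ, hv⟩ := hTB.exists_subseq_tendsto
  refine ⟨φ, hφ, v, Lp.memLp v, ?_⟩
  simp_rw [(hu _).integral_abs_sub_rpow hp₀]
  simpa [Real.zero_rpow hp₀.ne'] using
    ((tendsto_iff_dist_tendsto_zero.1 hv).rpow_const (Or.inr hp₀.le) :
      Tendsto _ _ (𝓝 ((0 : ℝ) ^ p)))

theorem stmt18_general (N : ℕ) (s p ε V₀ : ℝ) (hs : s ∈ Set.Ioo (0:ℝ) 1)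
    (hp : 1 < p) (hε : 0 < ε)
    (V : EuclideanSpace ℝ (Fin N) → ℝ)
    (hV₀pos : 0 < V₀) (hVlb : ∀ x, V₀ ≤ V x)
    (hVcoer : Tendsto V (cocompact (EuclideanSpace ℝ (Fin N))) atTop)
    (u : ℕ → EuclideanSpace ℝ (Fin N) → ℝ)
    (hup : ∀ n, MemLp (u n) (ENNReal.ofReal p) volume)
    (C : ℝ≥0∞) (hC : C ≠ ⊤)
    (hbdd : ∀ n,
      (∫⁻ x, ∫⁻ y,
          ENNReal.ofReal (|u n x - u n y| ^ p / dist x y ^ ((N : ℝ) + s * p))) +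
        (∫⁻ x, ENNReal.ofReal (V (ε • x) * |u n x| ^ p)) ≤ C) :
    ∃ φ : ℕ → ℕ, StrictMono φ ∧
      ∃ v : EuclideanSpace ℝ (Fin N) → ℝ, MemLp v (ENNReal.ofReal p) volume ∧
        Tendsto (fun n => ∫ x, |u (φ n) x - v x| ^ p) atTop (𝓝 0) := by
  have hp₀ : 0 < p := zero_lt_one.trans hp
  have hweighted : ∀ n, ∫⁻ x, ENNReal.ofReal (V (ε • x)) * ‖u n x‖ₑ ^ p ≤ C := fun n => by
    refine le_trans (le_of_eq (lintegral_congr fun x => ?_)) (le_add_self.trans (hbdd n))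
    rw [ENNReal.ofReal_mul (hV₀pos.le.trans (hVlb _)), ENNReal.ofReal_abs_rpow hp₀.le]
  refine exists_subseq_tendsto_of_gagliardo_le (e := N + s * p)
    (by linarith [mul_pos hs.1 hp₀]) hp.le hup (B := C / ENNReal.ofReal V₀)
    (ENNReal.div_ne_top hC (ENNReal.ofReal_pos.2 hV₀pos).ne') hC (fun n => ?_)
    (fun n => le_self_add.trans (hbdd n)) fun η hη => ?_
  · rw [ENNReal.le_div_iff_mul_le (Or.inl (ENNReal.ofReal_pos.2 hV₀pos).ne')
      (Or.inl ENNReal.ofReal_ne_top), mul_comm]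
    simpa using (ofReal_mul_setLIntegral_le_lintegral MeasurableSet.univ
      (fun x _ => hVlb (ε • x)) _).trans (hweighted n)
  · exact exists_forall_setLIntegral_le_of_tendsto_cocompact
      (hVcoer.comp (Homeomorph.smulOfNeZero ε hε.ne').isClosedEmbedding.tendsto_cocompact)
      hC hweighted hη

theorem stmt18 (N : ℕ) (hN : 1 ≤ N) (s p ε V₀ : ℝ) (hs : s ∈ Set.Ioo (0:ℝ) 1)
    (hp : 1 < p) (hNsp : s * p < N) (hε : 0 < ε)
    (V : EuclideanSpace ℝ (Fin N) → ℝ) (hV : Continuous V)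
    (hV₀pos : 0 < V₀) (hVlb : ∀ x, V₀ ≤ V x) (hVinf : (⨅ x, V x) = V₀)
    (hVcoer : Tendsto V (cocompact (EuclideanSpace ℝ (Fin N))) atTop)
    (u : ℕ → EuclideanSpace ℝ (Fin N) → ℝ)
    (humeas : ∀ n, AEStronglyMeasurable (u n) volume)
    (hup : ∀ n, MemLp (u n) (ENNReal.ofReal p) volume)
    (C : ℝ≥0∞) (hC : C ≠ ⊤)
    (hbdd : ∀ n,
      (∫⁻ x, ∫⁻ y,
          ENNReal.ofReal (|u n x - u n y| ^ p / dist x y ^ ((N : ℝ) + s * p))) +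
        (∫⁻ x, ENNReal.ofReal (V (ε • x) * |u n x| ^ p)) ≤ C) :
    ∃ φ : ℕ → ℕ, StrictMono φ ∧
      ∃ v : EuclideanSpace ℝ (Fin N) → ℝ, MemLp v (ENNReal.ofReal p) volume ∧
        Tendsto (fun n => ∫ x, |u (φ n) x - v x| ^ p) atTop (𝓝 0) :=
  stmt18_general N s p ε V₀ hs hp hε V hV₀pos hVlb hVcoer u hup C hC hbdd
end
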